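/- arXiv:2005.07080 — 10 statements merged into one kernel-verified Lean document; each statement's English description precedes it below -/
import Mathlib

section
/- There exist a natural number T1 and a constant B1 > 0 such that for all integers t ≥ T1 one has V(t) ≥ B1 · t^{2H}. -/
open Finset MeasureTheory ProbabilityTheory

/-- `V r t` is the variance of `S_t = Z_1 + … + Z_t` for a centered stationary sequence
with covariance function `r`. -/
noncomputable def V (r : ℤ → ℝ) (t : ℕ) : ℝ :=
  (t : ℝ) * r 0 + 2 * ∑ i ∈ Finset.Icc 2 t, ∑ j ∈ Finset.Icc 1 (i - 1), r ((i : ℤ) - (j : ℤ))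

private lemma sum_reflect' (g : ℤ → ℝ) (t : ℕ) :
    ∑ j ∈ Finset.Icc 1 t, g ((t : ℤ) + 1 - (j : ℤ)) = ∑ k ∈ Finset.Icc 1 t, g (k : ℤ) := by
  refine Finset.sum_nbij' (fun j => t + 1 - j) (fun k => t + 1 - k) ?_ ?_ ?_ ?_ ?_
  · intro a ha; simp only [Finset.mem_Icc] at *; omega
  · intro a ha; simp only [Finset.mem_Icc] at *; omega
  · intro a ha; simp only [Finset.mem_Icc] at *; omega
  · intro a ha; simp only [Finset.mem_Icc] at *; omega
  · intro a ha; simp only [Finset.mem_Icc] at ha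
    show g _ = g ((t + 1 - a : ℕ) : ℤ); congr 1; omega

private lemma double_sum_eq' (g : ℤ → ℝ) (t : ℕ) :
    ∑ i ∈ Finset.Icc 2 t, ∑ j ∈ Finset.Icc 1 (i - 1), g ((i : ℤ) - (j : ℤ))
      = ∑ k ∈ Finset.Icc 1 (t - 1), ((t - k : ℕ) : ℝ) * g (k : ℤ) := by
  induction t with
  | zero => simp
  | succ n ih =>
    rcases Nat.eq_zero_or_pos n with h0 | hn
    · subst h0; simp
    · rw [Finset.sum_Icc_succ_top (by omega : 2 ≤ n + 1), ih]
      have hrefl : ∑ j ∈ Finset.Icc 1 (n + 1 - 1), g ((↑(n+1) : ℤ) - (j : ℤ))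
          = ∑ k ∈ Finset.Icc 1 n, g (k : ℤ) := by
        rw [← sum_reflect' g n]
        refine Finset.sum_congr (by norm_num) fun j hj => ?_
        exact congrArg g (by push_cast; ring)
      rw [hrefl]
      have h2 : ∑ k ∈ Finset.Icc 1 (n + 1 - 1), ((n + 1 - k : ℕ) : ℝ) * g (k : ℤ)
          = ∑ k ∈ Finset.Icc 1 n, (((n - k : ℕ) : ℝ) * g (k : ℤ) + g (k : ℤ)) := by
        refine Finset.sum_congr (by norm_num) fun k hk => ?_
        simp only [Finset.mem_Icc] at hk
        have : n + 1 - k = (n - k) + 1 := by omega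
        rw [this]; push_cast; ring
      rw [h2, Finset.sum_add_distrib]
      have h3 : ∑ k ∈ Finset.Icc 1 n, ((n - k : ℕ) : ℝ) * g (k : ℤ)
          = ∑ k ∈ Finset.Icc 1 (n - 1), ((n - k : ℕ) : ℝ) * g (k : ℤ) := by
        have hins : Finset.Icc 1 n = insert n (Finset.Icc 1 (n - 1)) := by
          ext x; simp only [Finset.mem_Icc, Finset.mem_insert]; omega
        rw [hins, Finset.sum_insert (by simp only [Finset.mem_Icc]; omega)]
        simp
      rw [h3]

theorem variance_lower_bound
    (r : ℤ → ℝ) (hEven : ∀ t : ℤ, r (-t) = r t)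
    (hAbsSum : Summable fun t : ℤ => |r t|)
    (hSumZero : ∑' t : ℤ, r t = 0)
    (T0 : ℕ) (hT0 : 2 ≤ T0)
    (J1 J2 χ : ℝ) (hJ12 : J1 ≤ J2) (hJ2 : J2 < 0)
    (hχ : χ ∈ Set.Ioo (-2 : ℝ) (-1))
    (hbound : ∀ t : ℤ, (T0 : ℤ) ≤ t →
      J1 * (t : ℝ) ^ χ ≤ r t ∧ r t ≤ J2 * (t : ℝ) ^ χ)
    (H : ℝ) (hH : H = χ / 2 + 1) :
    ∃ (T1 : ℕ) (B1 : ℝ), 0 < B1 ∧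
      ∀ t : ℕ, T1 ≤ t → B1 * (t : ℝ) ^ (2 * H) ≤ V r t := by
  obtain ⟨hχ1, hχ2⟩ := hχ
  -- summability facts
  have hsumr : Summable r := hAbsSum.of_abs
  have hsN : Summable (fun n : ℕ => r (n : ℤ)) :=
    hsumr.comp_injective fun a b h => by exact_mod_cast h
  set f : ℕ → ℝ := fun n => r ((n : ℤ) + 1) with hf
  have hsf : Summable f := by
    have h := (summable_nat_add_iff 1).2 hsN
    exact h.congr fun n => congrArg r (by push_cast; ring)
  -- relation between r 0 and the tsum of f
  have hS : r 0 + 2 * ∑' n, f n = 0 := by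
    have hneg : (fun n : ℕ => r (-((n : ℤ) + 1))) = f := by
      funext n; rw [hEven]
    have h1 := tsum_of_nat_of_neg_add_one hsN (by rw [hneg]; exact hsf)
    rw [hSumZero, hneg] at h1
    have h2 := Summable.tsum_eq_zero_add hsN
    have h3 : ∑' n : ℕ, r ((n : ℤ) + 1) = ∑' n, f n := rfl
    have h4 : (fun n : ℕ => r ((n + 1 : ℕ) : ℤ)) = f := by
      funext n; exact congrArg r (by push_cast; ring)
    rw [h4] at h2
    simp only [Nat.cast_zero] at h2
    linarith [h1.symm, h2]
  -- pointwise bounds on r at natural arguments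
  have hrle : ∀ m : ℕ, T0 ≤ m → r (m : ℤ) ≤ J2 * (m : ℝ) ^ χ := by
    intro m hm
    have := (hbound (m : ℤ) (by exact_mod_cast hm)).2
    simpa using this
  have hrneg : ∀ m : ℕ, T0 ≤ m → r (m : ℤ) ≤ 0 := by
    intro m hm
    have h1 := hrle m hm
    have h2 : (0 : ℝ) < (m : ℝ) ^ χ :=
      Real.rpow_pos_of_pos (by exact_mod_cast (by omega : 0 < m)) χ
    nlinarith
  have hfle : ∀ n : ℕ, T0 ≤ n + 1 → f n ≤ J2 * ((n + 1 : ℕ) : ℝ) ^ χ := by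
    intro n hn
    have : f n = r ((n + 1 : ℕ) : ℤ) := congrArg r (by push_cast; ring)
    rw [this]; exact hrle (n + 1) hn
  have hfneg : ∀ n : ℕ, T0 ≤ n + 1 → f n ≤ 0 := by
    intro n hn
    have : f n = r ((n + 1 : ℕ) : ℤ) := congrArg r (by push_cast; ring)
    rw [this]; exact hrneg (n + 1) hn
  -- the constant capturing the initial segment
  set C0 : ℝ := ∑ k ∈ Finset.Ioc 0 (T0 - 1), (k : ℝ) * |r (k : ℤ)| with hC0def
  have hC0 : 0 ≤ C0 := Finset.sum_nonneg fun k _ => by positivity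
  set c : ℝ := (-2 * J2) * (2 : ℝ) ^ χ with hcdef
  have hc : 0 < c := by
    have : (0 : ℝ) < (2 : ℝ) ^ χ := Real.rpow_pos_of_pos two_pos χ
    nlinarith
  -- main estimate for t ≥ T0
  have key : ∀ t : ℕ, T0 ≤ t → c * (t : ℝ) ^ (χ + 2) - 2 * C0 ≤ V r t := by
    intro t ht
    have ht1 : 1 ≤ t := by omega
    have ht0R : (0 : ℝ) < (t : ℝ) := by exact_mod_cast (by omega : 0 < t)
    set A : ℝ := ∑ k ∈ Finset.Icc 1 (t - 1), r (k : ℤ) with hA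
    set B : ℝ := ∑ k ∈ Finset.Icc 1 (t - 1), (k : ℝ) * r (k : ℤ) with hB
    -- decompose V
    have hV : V r t = (t : ℝ) * r 0 + 2 * ((t : ℝ) * A - B) := by
      rw [V, double_sum_eq']
      have hsum : ∑ k ∈ Finset.Icc 1 (t - 1), ((t - k : ℕ) : ℝ) * r (k : ℤ)
          = (t : ℝ) * A - B := by
        rw [hA, hB, Finset.mul_sum, ← Finset.sum_sub_distrib]
        refine Finset.sum_congr rfl fun k hk => ?_
        simp only [Finset.mem_Icc] at hk
        rw [Nat.cast_sub (by omega : k ≤ t)]; ring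
      rw [hsum]
    set tail : ℝ := ∑' n, f (n + (t - 1)) with htail
    have htt : A + tail = ∑' n, f n := by
      have h := Summable.sum_add_tsum_nat_add (f := f) (t - 1) hsf
      rw [← h]
      congr 1
      rw [hA, show Finset.Icc 1 (t - 1) = Finset.Ico 1 t by
        rw [← Finset.Ico_add_one_right_eq_Icc]; congr 1; omega]
      rw [Finset.sum_Ico_eq_sum_range]
      exact Finset.sum_congr rfl fun i _ => congrArg r (by push_cast; ring)
    -- V = -2 t tail - 2 B
    have hV2 : V r t = -2 * (t : ℝ) * tail - 2 * B := by
      rw [hV]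
      have hA' : A = ∑' n, f n - tail := by linarith [htt]
      rw [hA']
      have : r 0 = -2 * ∑' n, f n := by linarith [hS]
      rw [this]; ring
    -- bound the tail
    have hshift : Summable fun n => f (n + (t - 1)) := (summable_nat_add_iff _).2 hsf
    have htail_split := Summable.sum_add_tsum_nat_add (f := fun n => f (n + (t - 1))) t hshift
    have htail2 : (∑' n : ℕ, f (n + t + (t - 1))) ≤ 0 := by
      refine tsum_nonpos fun n => hfneg _ (by omega)
    have htail1 : ∑ i ∈ Finset.range t, f (i + (t - 1))
        ≤ (t : ℝ) * (J2 * ((2 * t : ℕ) : ℝ) ^ χ) := by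
      have hbnd : ∀ i ∈ Finset.range t, f (i + (t - 1)) ≤ J2 * ((2 * t : ℕ) : ℝ) ^ χ := by
        intro i hi
        simp only [Finset.mem_range] at hi
        have h1 : f (i + (t - 1)) ≤ J2 * ((i + (t - 1) + 1 : ℕ) : ℝ) ^ χ :=
          hfle _ (by omega)
        have hle : ((i + (t - 1) + 1 : ℕ) : ℝ) ≤ ((2 * t : ℕ) : ℝ) := by
          exact_mod_cast (by omega : i + (t - 1) + 1 ≤ 2 * t)
        have hpos : (0 : ℝ) < ((i + (t - 1) + 1 : ℕ) : ℝ) := by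
          exact_mod_cast (by omega : 0 < i + (t - 1) + 1)
        have hrp : ((2 * t : ℕ) : ℝ) ^ χ ≤ ((i + (t - 1) + 1 : ℕ) : ℝ) ^ χ :=
          Real.rpow_le_rpow_of_nonpos hpos hle (by linarith)
        have : J2 * ((i + (t - 1) + 1 : ℕ) : ℝ) ^ χ ≤ J2 * ((2 * t : ℕ) : ℝ) ^ χ := by
          nlinarith
        linarith
      calc ∑ i ∈ Finset.range t, f (i + (t - 1))
          ≤ ∑ _i ∈ Finset.range t, J2 * ((2 * t : ℕ) : ℝ) ^ χ :=
            Finset.sum_le_sum hbnd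
        _ = (t : ℝ) * (J2 * ((2 * t : ℕ) : ℝ) ^ χ) := by
            rw [Finset.sum_const, Finset.card_range, nsmul_eq_mul]
    have htailb : tail ≤ (t : ℝ) * (J2 * ((2 * t : ℕ) : ℝ) ^ χ) := by
      rw [htail, ← htail_split]; linarith
    -- convert (2t)^χ
    have h2t : ((2 * t : ℕ) : ℝ) ^ χ = (2 : ℝ) ^ χ * (t : ℝ) ^ χ := by
      have : ((2 * t : ℕ) : ℝ) = 2 * (t : ℝ) := by push_cast; ring
      rw [this, Real.mul_rpow (by norm_num) (le_of_lt ht0R)]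
    -- bound on B
    have hBb : B ≤ C0 := by
      rw [hB, show Finset.Icc 1 (t - 1) = Finset.Ioc 0 (t - 1) from Finset.Icc_add_one_left_eq_Ioc 0 (t - 1)]
      have hsplit := Finset.sum_Ioc_consecutive (fun k : ℕ => (k : ℝ) * r (k : ℤ))
        (by omega : 0 ≤ T0 - 1) (by omega : T0 - 1 ≤ t - 1)
      rw [← hsplit]
      have h1 : ∑ k ∈ Finset.Ioc 0 (T0 - 1), (k : ℝ) * r (k : ℤ) ≤ C0 := by
        refine Finset.sum_le_sum fun k _ => ?_
        exact mul_le_mul_of_nonneg_left (le_abs_self _) (by positivity)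
      have h2 : ∑ k ∈ Finset.Ioc (T0 - 1) (t - 1), (k : ℝ) * r (k : ℤ) ≤ 0 := by
        refine Finset.sum_nonpos fun k hk => ?_
        simp only [Finset.mem_Ioc] at hk
        exact mul_nonpos_iff.2 (Or.inl ⟨by positivity, hrneg k (by omega)⟩)
      linarith
    -- put everything together
    have hmono : -2 * (t : ℝ) * ((t : ℝ) * (J2 * ((2 * t : ℕ) : ℝ) ^ χ))
        ≤ -2 * (t : ℝ) * tail := by
      have hneg : -2 * (t : ℝ) ≤ 0 := by linarith
      exact mul_le_mul_of_nonpos_left htailb hneg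
    have hpow : (t : ℝ) ^ (χ + 2) = (t : ℝ) ^ χ * (t : ℝ) * (t : ℝ) := by
      rw [Real.rpow_add ht0R, Real.rpow_two]; ring
    have heq : -2 * (t : ℝ) * ((t : ℝ) * (J2 * ((2 * t : ℕ) : ℝ) ^ χ))
        = c * (t : ℝ) ^ (χ + 2) := by
      rw [h2t, hpow, hcdef]; ring
    rw [hV2]
    linarith [hmono, hBb]
  -- choose T1 using the divergence of t^(2H)
  have h2H : (0 : ℝ) < 2 * H := by rw [hH]; linarith
  have hHχ : 2 * H = χ + 2 := by rw [hH]; ring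
  have htend : Filter.Tendsto (fun n : ℕ => (n : ℝ) ^ (2 * H)) Filter.atTop Filter.atTop :=
    (tendsto_rpow_atTop h2H).comp tendsto_natCast_atTop_atTop
  have hev := htend.eventually_ge_atTop (4 * C0 / c)
  rw [Filter.eventually_atTop] at hev
  obtain ⟨N, hN⟩ := hev
  refine ⟨max N T0, c / 2, by positivity, fun t ht => ?_⟩
  have htT0 : T0 ≤ t := le_trans (le_max_right _ _) ht
  have h1 := key t htT0
  have h2 : 4 * C0 / c ≤ (t : ℝ) ^ (2 * H) := hN t (le_trans (le_max_left _ _) ht)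
  have h3 : 4 * C0 ≤ (t : ℝ) ^ (2 * H) * c := (div_le_iff₀ hc).1 h2
  rw [← hHχ] at h1
  linarith
end

section
/- There exist a natural number T2 and a constant B2 > 0 such that for all integers t ≥ T2 one has V(t) ≤ B2 · t^{2H}. -/
/-!
Expanding the double sum, `V t = t r(0) + 2 ∑_{1 ≤ k < t} (t - k) r(k)`. Since `r` is even with
total sum zero, `r(0) + 2 ∑_{1 ≤ k < t} r(k) = -2 ∑_{k ≥ t} r(k)`, hence
`V t = -2t ∑_{k ≥ t} r(k) - 2 ∑_{1 ≤ k < t} k r(k)`. The power bound makes `|r(k)| ≤ C k^χ` for all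
`k ≥ 1`; comparing the tail with `∫_{t-1}^∞ x^χ dx` bounds the first term by a multiple of
`t · t^(χ+1)`, and telescoping Bernoulli's inequality for the concave power `x^(χ+2)` bounds the
second by a multiple of `t^(χ+2) = t^(2H)`.
-/

open Finset MeasureTheory ProbabilityTheory

lemma sum_Icc_one_sub_eq_sum_Ico (f : ℤ → ℝ) (i : ℕ) :
    ∑ j ∈ Icc 1 (i - 1), f ((i : ℤ) - j) = ∑ k ∈ Ico 1 i, f k := by
  refine sum_nbij' (i - ·) (i - ·) ?_ ?_ ?_ ?_ ?_ <;> intro j hj <;>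
    simp only [mem_Icc, mem_Ico] at hj ⊢
  all_goals first | omega | (congr 1; omega)

lemma sum_Icc_two_sum_Ico_one (g : ℕ → ℝ) (t : ℕ) :
    ∑ i ∈ Icc 2 t, ∑ k ∈ Ico 1 i, g k = ∑ k ∈ Ico 1 t, ((t : ℝ) - k) * g k := by
  have hmem (i k : ℕ) : i ∈ Icc 2 t ∧ k ∈ Ico 1 i ↔ i ∈ Ioc k t ∧ k ∈ Ico 1 t := by
    simp only [mem_Icc, mem_Ico, mem_Ioc]; omega
  rw [sum_comm' hmem]
  refine sum_congr rfl fun k hk => ?_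
  rw [sum_const, Nat.card_Ioc, nsmul_eq_mul, Nat.cast_sub (mem_Ico.1 hk).2.le]

theorem V_eq_sum_Ico (r : ℤ → ℝ) (t : ℕ) :
    V r t = t * r 0 + 2 * ∑ k ∈ Ico 1 t, ((t : ℝ) - k) * r k := by
  simp only [V, sum_Icc_one_sub_eq_sum_Ico]
  rw [sum_Icc_two_sum_Ico_one (fun k => r k)]

section Covariance

variable {r : ℤ → ℝ}

lemma hasSum_nat_of_even (hr : HasSum r 0) (heven : Function.Even r) :
    HasSum (fun n : ℕ => r n) (r 0 / 2) := by
  have h := hr.nat_add_neg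
  simp only [heven _, zero_add, ← two_mul] at h
  simpa using h.div_const 2

lemma two_mul_sum_range_sub_eq_tsum (hr : HasSum r 0) (heven : Function.Even r) (t : ℕ) :
    2 * ∑ k ∈ range t, r k - r 0 = -2 * ∑' n : ℕ, r (n + t : ℕ) := by
  have h := hasSum_nat_of_even hr heven
  have := h.summable.sum_add_tsum_nat_add t
  rw [h.tsum_eq] at this
  push_cast at this ⊢
  linarith

theorem V_eq_neg_tail (hr : HasSum r 0) (heven : Function.Even r) {t : ℕ} (ht : 1 ≤ t) :
    V r t = -2 * t * ∑' n : ℕ, r (n + t : ℕ) - 2 * ∑ k ∈ Ico 1 t, (k : ℝ) * r k := by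
  have h := two_mul_sum_range_sub_eq_tsum hr heven t
  rw [sum_range_eq_add_Ico _ ht] at h
  rw [V_eq_sum_Ico]
  simp only [sub_mul, sum_sub_distrib, ← mul_sum]
  push_cast at h ⊢
  linear_combination (t : ℝ) * h

end Covariance

lemma exists_pos_abs_le_mul_rpow {f : ℕ → ℝ} {C₀ χ : ℝ} {T : ℕ}
    (h : ∀ k, T ≤ k → |f k| ≤ C₀ * (k : ℝ) ^ χ) :
    ∃ C, 0 < C ∧ ∀ k, 1 ≤ k → |f k| ≤ C * (k : ℝ) ^ χ := by
  set S := ∑ j ∈ range T, |f j| / (j : ℝ) ^ χ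
  have hS : 0 ≤ S := sum_nonneg fun j _ => by positivity
  refine ⟨max C₀ 1 + S, by positivity, fun k hk => ?_⟩
  have hpos : 0 < (k : ℝ) ^ χ := Real.rpow_pos_of_pos (by exact_mod_cast hk) χ
  rcases le_or_gt T k with hTk | hkT
  · calc |f k| ≤ C₀ * (k : ℝ) ^ χ := h k hTk
      _ ≤ (max C₀ 1 + S) * (k : ℝ) ^ χ := by gcongr; linarith [le_max_left C₀ 1]
  · have hk : |f k| / (k : ℝ) ^ χ ≤ S :=
      single_le_sum (f := fun j : ℕ => |f j| / (j : ℝ) ^ χ) (fun j _ => by positivity)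
        (mem_range.2 hkT)
    rw [div_le_iff₀ hpos] at hk
    nlinarith [le_max_right C₀ 1]

lemma rpow_sub_one_mul_le_rpow_sub_rpow {p x : ℝ} (hp₀ : 0 ≤ p) (hp₁ : p ≤ 1) (hx : 1 ≤ x) :
    p * x ^ (p - 1) ≤ x ^ p - (x - 1) ^ p := by
  have hx₀ : 0 < x := by linarith
  have hB := rpow_one_add_le_one_add_mul_self (s := -x⁻¹) (by
    rw [neg_le_neg_iff]; exact inv_le_one_of_one_le₀ hx) hp₀ hp₁
  have hsplit : x - 1 = x * (1 + -x⁻¹) := by field_simp; ring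
  rw [hsplit, Real.mul_rpow hx₀.le (by linarith [inv_le_one_of_one_le₀ hx]),
    Real.rpow_sub_one hx₀.ne']
  calc p * (x ^ p / x) = x ^ p - x ^ p * (1 + p * -x⁻¹) := by field_simp; ring
    _ ≤ x ^ p - x ^ p * (1 + -x⁻¹) ^ p := by gcongr

lemma sum_Ico_one_rpow_sub_one_le {p : ℝ} (hp₀ : 0 < p) (hp₁ : p ≤ 1) (t : ℕ) :
    ∑ k ∈ Ico 1 t, (k : ℝ) ^ (p - 1) ≤ (t : ℝ) ^ p / p := by
  rw [le_div_iff₀ hp₀, sum_mul]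
  calc ∑ k ∈ Ico 1 t, (k : ℝ) ^ (p - 1) * p
      ≤ ∑ k ∈ Ico 1 t, ((k : ℝ) ^ p - ((k - 1 : ℕ) : ℝ) ^ p) := by
        refine sum_le_sum fun k hk => ?_
        have hk := (mem_Ico.1 hk).1
        rw [mul_comm, Nat.cast_sub hk, Nat.cast_one]
        exact rpow_sub_one_mul_le_rpow_sub_rpow hp₀.le hp₁ (by exact_mod_cast hk)
    _ = ((t - 1 : ℕ) : ℝ) ^ p := by
        rw [sum_Ico_eq_sum_range]
        simpa [add_comm 1, Real.zero_rpow hp₀.ne'] using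
          sum_range_sub (fun k : ℕ => (k : ℝ) ^ p) (t - 1)
    _ ≤ (t : ℝ) ^ p := by gcongr; omega

lemma tsum_nat_add_rpow_le {χ : ℝ} (hχ : χ < -1) {t : ℕ} (ht : 2 ≤ t) :
    ∑' n : ℕ, ((n + t : ℕ) : ℝ) ^ χ ≤ ((t : ℝ) / 2) ^ (χ + 1) / -(χ + 1) := by
  have ht' : (2 : ℝ) ≤ t := by exact_mod_cast ht
  have hN : ((t - 1 : ℕ) : ℝ) = t - 1 := by rw [Nat.cast_sub (by omega), Nat.cast_one]
  have hN₀ : (0 : ℝ) < ((t - 1 : ℕ) : ℝ) := by rw [hN]; linarith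
  have key := AntitoneOn.tsum_comp_add_le_integral (f := fun x : ℝ => x ^ χ) (t - 1)
    (fun x hx y _ hxy => Real.rpow_le_rpow_of_nonpos (hN₀.trans_le hx) hxy (by linarith))
    (integrableOn_Ioi_rpow_of_lt hχ hN₀)
    (fun x hx => Real.rpow_nonneg (hN₀.trans hx).le χ)
  rw [integral_Ioi_rpow_of_lt hχ hN₀, hN] at key
  have hshift : ∀ n : ℕ, n + (t - 1) + 1 = n + t := fun n => by omega
  simp only [hshift] at key
  refine key.trans ?_
  rw [neg_div, ← div_neg]
  gcongr ?_ / _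
  · linarith
  · exact Real.rpow_le_rpow_of_nonpos (by positivity) (by linarith) (by linarith)

section PowerDecay

variable {r : ℤ → ℝ} {C χ : ℝ} (hC : ∀ k : ℕ, 1 ≤ k → |r k| ≤ C * (k : ℝ) ^ χ)
include hC

lemma nonneg_of_forall_abs_le_mul_rpow : 0 ≤ C := by
  simpa using (abs_nonneg _).trans (hC 1 le_rfl)

lemma abs_tsum_nat_add_le (hχ : χ < -1) {t : ℕ} (ht : 2 ≤ t) :
    |∑' n : ℕ, r (n + t : ℕ)| ≤ C * (((t : ℝ) / 2) ^ (χ + 1) / -(χ + 1)) := by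
  have hC₀ := nonneg_of_forall_abs_le_mul_rpow hC
  have hsum : Summable fun n : ℕ => ((n + t : ℕ) : ℝ) ^ χ :=
    (Real.summable_nat_rpow.2 hχ).comp_injective (add_left_injective t)
  calc |∑' n : ℕ, r (n + t : ℕ)| ≤ C * ∑' n : ℕ, ((n + t : ℕ) : ℝ) ^ χ :=
        tsum_of_norm_bounded (f := fun n : ℕ => r (n + t : ℕ)) (hsum.hasSum.mul_left C)
          fun n => hC (n + t) (by omega)
    _ ≤ C * (((t : ℝ) / 2) ^ (χ + 1) / -(χ + 1)) := by
        gcongr; exact tsum_nat_add_rpow_le hχ ht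

lemma abs_sum_Ico_mul_le (hχ : χ ∈ Set.Ioo (-2) (-1)) (t : ℕ) :
    |∑ k ∈ Ico 1 t, (k : ℝ) * r k| ≤ C * ((t : ℝ) ^ (χ + 2) / (χ + 2)) := by
  calc |∑ k ∈ Ico 1 t, (k : ℝ) * r k| ≤ ∑ k ∈ Ico 1 t, (k : ℝ) * |r k| := by
        refine (abs_sum_le_sum_abs _ _).trans_eq (sum_congr rfl fun k _ => ?_)
        rw [abs_mul, Nat.abs_cast]
    _ ≤ ∑ k ∈ Ico 1 t, C * (k : ℝ) ^ (χ + 2 - 1) := by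
        refine sum_le_sum fun k hk => ?_
        have hk₁ := (mem_Ico.1 hk).1
        have hk₀ : (0 : ℝ) < k := by exact_mod_cast hk₁
        rw [show χ + 2 - 1 = χ + 1 by ring, Real.rpow_add_one hk₀.ne']
        nlinarith [hC k hk₁]
    _ ≤ C * ((t : ℝ) ^ (χ + 2) / (χ + 2)) := by
        rw [← mul_sum]
        have hC₀ := nonneg_of_forall_abs_le_mul_rpow hC
        gcongr
        exact sum_Ico_one_rpow_sub_one_le (by linarith [hχ.1]) (by linarith [hχ.2]) t

theorem abs_V_le (hr : HasSum r 0) (heven : Function.Even r) (hχ : χ ∈ Set.Ioo (-2) (-1))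
    {t : ℕ} (ht : 2 ≤ t) :
    |V r t| ≤ 2 * C * (2 / -(χ + 1) + 1 / (χ + 2)) * (t : ℝ) ^ (χ + 2) := by
  have ht₀ : (0 : ℝ) < t := by positivity
  have htail := abs_tsum_nat_add_le hC hχ.2 ht
  have hweighted := abs_sum_Ico_mul_le hC hχ t
  have hhalf : (t : ℝ) * ((t : ℝ) / 2) ^ (χ + 1) ≤ 2 * (t : ℝ) ^ (χ + 2) := by
    calc (t : ℝ) * ((t : ℝ) / 2) ^ (χ + 1) = 2 * ((t : ℝ) / 2) ^ (χ + 1 + 1) := by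
          rw [Real.rpow_add_one (by positivity) (χ + 1)]; ring
      _ ≤ 2 * (t : ℝ) ^ (χ + 2) := by
          rw [show χ + 1 + 1 = χ + 2 by ring]
          gcongr
          · linarith [hχ.1]
          · linarith
  rw [V_eq_neg_tail hr heven (by omega)]
  have hχ₁ : 0 < -(χ + 1) := by linarith [hχ.2]
  have hχ₂ : 0 < χ + 2 := by linarith [hχ.1]
  calc _ ≤ 2 * t * |∑' n : ℕ, r (n + t : ℕ)| + 2 * |∑ k ∈ Ico 1 t, (k : ℝ) * r k| := by
        refine (abs_sub _ _).trans ?_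
        rw [abs_mul, abs_mul, abs_mul]
        simp [abs_of_pos ht₀]
    _ ≤ 2 * t * (C * (((t : ℝ) / 2) ^ (χ + 1) / -(χ + 1)))
          + 2 * (C * ((t : ℝ) ^ (χ + 2) / (χ + 2))) := by gcongr
    _ = 2 * C / -(χ + 1) * ((t : ℝ) * ((t : ℝ) / 2) ^ (χ + 1))
          + 2 * C * (1 / (χ + 2)) * (t : ℝ) ^ (χ + 2) := by ring
    _ ≤ 2 * C / -(χ + 1) * (2 * (t : ℝ) ^ (χ + 2))
          + 2 * C * (1 / (χ + 2)) * (t : ℝ) ^ (χ + 2) := by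
        have hC₀ := nonneg_of_forall_abs_le_mul_rpow hC
        gcongr
    _ = _ := by ring

end PowerDecay

theorem variance_upper_bound_general
    (r : ℤ → ℝ) (hEven : ∀ t : ℤ, r (-t) = r t)
    (hAbsSum : Summable fun t : ℤ => |r t|)
    (hSumZero : ∑' t : ℤ, r t = 0)
    (T0 : ℕ)
    (J1 J2 χ : ℝ)
    (hχ : χ ∈ Set.Ioo (-2 : ℝ) (-1))
    (hbound : ∀ t : ℤ, (T0 : ℤ) ≤ t →
      J1 * (t : ℝ) ^ χ ≤ r t ∧ r t ≤ J2 * (t : ℝ) ^ χ)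
    (H : ℝ) (hH : H = χ / 2 + 1) :
    ∃ (T2 : ℕ) (B2 : ℝ), 0 < B2 ∧
      ∀ t : ℕ, T2 ≤ t → V r t ≤ B2 * (t : ℝ) ^ (2 * H) := by
  have hr : HasSum r 0 := hSumZero ▸ hAbsSum.of_abs.hasSum
  have hdecay (k : ℕ) (hk : T0 ≤ k) : |r k| ≤ max |J1| |J2| * (k : ℝ) ^ χ := by
    obtain ⟨hlow, hup⟩ := hbound k (by exact_mod_cast hk)
    have hk₀ : 0 ≤ (k : ℝ) ^ χ := Real.rpow_nonneg k.cast_nonneg χ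
    push_cast at hlow hup
    simpa only [abs_mul, abs_of_nonneg hk₀, ← max_mul_of_nonneg _ _ hk₀]
      using abs_le_max_abs_abs hlow hup
  obtain ⟨C, hC₀, hC⟩ := exists_pos_abs_le_mul_rpow hdecay
  have hχ₁ : 0 < -(χ + 1) := by linarith [hχ.2]
  have hχ₂ : 0 < χ + 2 := by linarith [hχ.1]
  refine ⟨2, 2 * C * (2 / -(χ + 1) + 1 / (χ + 2)), by positivity, fun t ht => ?_⟩
  rw [hH, show 2 * (χ / 2 + 1) = χ + 2 by ring]
  exact (le_abs_self _).trans (abs_V_le hC hr hEven hχ ht)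

theorem variance_upper_bound
    (r : ℤ → ℝ) (hEven : ∀ t : ℤ, r (-t) = r t)
    (hAbsSum : Summable fun t : ℤ => |r t|)
    (hSumZero : ∑' t : ℤ, r t = 0)
    (T0 : ℕ) (hT0 : 2 ≤ T0)
    (J1 J2 χ : ℝ) (hJ12 : J1 ≤ J2) (hJ2 : J2 < 0)
    (hχ : χ ∈ Set.Ioo (-2 : ℝ) (-1))
    (hbound : ∀ t : ℤ, (T0 : ℤ) ≤ t →
      J1 * (t : ℝ) ^ χ ≤ r t ∧ r t ≤ J2 * (t : ℝ) ^ χ)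
    (H : ℝ) (hH : H = χ / 2 + 1) :
    ∃ (T2 : ℕ) (B2 : ℝ), 0 < B2 ∧
      ∀ t : ℕ, T2 ≤ t → V r t ≤ B2 * (t : ℝ) ^ (2 * H) :=
  variance_upper_bound_general r hEven hAbsSum hSumZero T0 J1 J2 χ hχ hbound H hH
end

section
/- There exist a natural number T3 and a constant D1 > 0 such that for all integers s > t > T3 one has C(s,t) ≤ D1. -/
open Finset MeasureTheory ProbabilityTheory

/-- `Cst r s t` is the covariance `cov(S_s - S_t, S_t)` of the partial-sum process
of a centered stationary sequence with covariance function `r`. -/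
noncomputable def Cst (r : ℤ → ℝ) (s t : ℕ) : ℝ :=
  ∑ i ∈ Finset.Icc (t + 1) s, ∑ j ∈ Finset.Icc 1 t, r ((i : ℤ) - (j : ℤ))

theorem covariance_upper_bound
    (r : ℤ → ℝ) (hEven : ∀ t : ℤ, r (-t) = r t)
    (hAbsSum : Summable fun t : ℤ => |r t|)
    (hSumZero : ∑' t : ℤ, r t = 0)
    (T0 : ℕ) (hT0 : 2 ≤ T0)
    (J1 J2 χ : ℝ) (hJ12 : J1 ≤ J2) (hJ2 : J2 < 0)
    (hχ : χ ∈ Set.Ioo (-2 : ℝ) (-1))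
    (hbound : ∀ t : ℤ, (T0 : ℤ) ≤ t →
      J1 * (t : ℝ) ^ χ ≤ r t ∧ r t ≤ J2 * (t : ℝ) ^ χ)
    (H : ℝ) (hH : H = χ / 2 + 1) :
    ∃ (T3 : ℕ) (D1 : ℝ), 0 < D1 ∧
      ∀ s t : ℕ, T3 < t → t < s → Cst r s t ≤ D1 := by
  set A : ℝ := ∑' k : ℤ, |r k| with hA
  have hA0 : 0 ≤ A := tsum_nonneg fun k => abs_nonneg _
  refine ⟨0, (T0 : ℝ) * A + 1, by positivity, ?_⟩
  intro s t _ hts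
  set g : ℤ → ℝ := fun k => if k < (T0 : ℤ) then |r k| else 0 with hg
  have hg0 : ∀ k, 0 ≤ g k := by
    intro k; simp only [hg]
    split
    · exact abs_nonneg _
    · exact le_refl 0
  have hrg : ∀ k : ℤ, r k ≤ g k := by
    intro k
    by_cases hk : k < (T0 : ℤ)
    · simp only [hg, if_pos hk]; exact le_abs_self _
    · push_neg at hk
      have h1 := (hbound k hk).2
      have hkpos : (0 : ℝ) < (k : ℝ) := by
        have : (0 : ℤ) < k := by omega
        exact_mod_cast this
      have h2 : J2 * (k : ℝ) ^ χ ≤ 0 :=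
        le_of_lt (mul_neg_of_neg_of_pos hJ2 (Real.rpow_pos_of_pos hkpos χ))
      simp only [hg, if_neg (not_lt.mpr hk)]
      linarith
  have step1 : Cst r s t ≤ ∑ i ∈ Icc (t + 1) s, ∑ j ∈ Icc 1 t, g ((i : ℤ) - j) := by
    unfold Cst
    exact Finset.sum_le_sum fun i _ => Finset.sum_le_sum fun j _ => hrg _
  have inner_le_A : ∀ i : ℕ, ∑ j ∈ Icc 1 t, g ((i : ℤ) - j) ≤ A := by
    intro i
    have h1 : ∑ j ∈ Icc 1 t, g ((i : ℤ) - j) ≤ ∑ j ∈ Icc 1 t, |r ((i : ℤ) - j)| := by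
      refine Finset.sum_le_sum fun j _ => ?_
      simp only [hg]
      split
      · exact le_rfl
      · exact abs_nonneg _
    let e : ℕ ↪ ℤ := ⟨fun j => (i : ℤ) - j, by intro a b h; simp only at h; omega⟩
    have h2 : ∑ j ∈ Icc 1 t, |r ((i : ℤ) - j)| = ∑ k ∈ (Icc 1 t).map e, |r k| := by
      rw [Finset.sum_map]; rfl
    have h3 : ∑ k ∈ (Icc 1 t).map e, |r k| ≤ A :=
      Summable.sum_le_tsum _ (fun _ _ => abs_nonneg _) hAbsSum
    linarith
  have inner_zero : ∀ i : ℕ, ¬ i < t + T0 → ∑ j ∈ Icc 1 t, g ((i : ℤ) - j) = 0 := by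
    intro i hi2
    refine Finset.sum_eq_zero fun j hj => ?_
    have hj' : j ≤ t := (Finset.mem_Icc.mp hj).2
    have hle : (T0 : ℤ) ≤ (i : ℤ) - j := by push_neg at hi2; omega
    simp only [hg, if_neg (not_lt.mpr hle)]
  have step2 : ∑ i ∈ Icc (t + 1) s, ∑ j ∈ Icc 1 t, g ((i : ℤ) - j)
      ≤ ∑ i ∈ Icc (t + 1) s, (if i < t + T0 then A else 0) := by
    refine Finset.sum_le_sum fun i hi => ?_
    by_cases h : i < t + T0
    · simpa [h] using inner_le_A i
    · rw [inner_zero i h]; simp [h]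
  have step3 : ∑ i ∈ Icc (t + 1) s, (if i < t + T0 then A else 0) ≤ (T0 : ℝ) * A := by
    rw [← Finset.sum_filter]
    have hsub : (Icc (t + 1) s).filter (fun i => i < t + T0) ⊆ Ico (t + 1) (t + T0) := by
      intro i hi
      simp only [Finset.mem_filter, Finset.mem_Icc] at hi
      simp only [Finset.mem_Ico]
      omega
    calc ∑ _i ∈ (Icc (t + 1) s).filter (fun i => i < t + T0), A
        = ((Icc (t + 1) s).filter (fun i => i < t + T0)).card • A := by
          rw [Finset.sum_const]
      _ ≤ (Ico (t + 1) (t + T0)).card • A := by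
          exact nsmul_le_nsmul_left hA0 (Finset.card_le_card hsub)
      _ ≤ (T0 : ℝ) * A := by
          rw [Nat.card_Ico, nsmul_eq_mul]
          have : ((t + T0 - (t + 1) : ℕ) : ℝ) ≤ (T0 : ℝ) := by
            have : t + T0 - (t + 1) ≤ T0 := by omega
            exact_mod_cast this
          nlinarith
  linarith
end

section
/- Fix v > 1 and set U(v) := J2 · (2H)^{−1} · (2H−1)^{−1} · (1 − (v^{2H} − (v−1)^{2H})). Then there exist a natural number T3 and a constant D2 > 0 such that for all integers s > t > T3 with s/t > v one has C(s,t) ≤ D2 − U(v)·t^{2H} and D2 − U(v)·t^{2H} < 0. -/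
/-!
Split `r k = J₂ k^χ + e k` with `e k ≤ 0` for `k ≥ T₀`. Only `T₀²` pairs `(i, j)` have
`i - j < T₀`, so the `e`-part of `C(s,t)` is bounded by a constant. Since `(x - y)^χ` is
monotone in each variable, the double sum `∑ (i - j)^χ` dominates the double integral of
`(x - y)^χ` over `[t+1, s+1] × [0, t]`, which with `p = 2H` equals
`((t+1)^p + (s+1-t)^p - (s+1)^p - 1) / (p (1 - p))`. Scaling by `t` and concavity of `x ↦ x^p`
(its unit increments `(u+1)^p - u^p` strictly decrease) give
`(s+1)^p - (s+1-t)^p ≤ t^p (v^p - (v-1)^p)` and `v^p - (v-1)^p < 1`, so the main part is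
`≤ -U(v) t^p + const` with `U(v) > 0`, and `t^p → ∞` yields `T₃`.
-/
open Finset MeasureTheory ProbabilityTheory

lemma strictAntiOn_rpow_add_one_sub_rpow {p : ℝ} (hp0 : 0 < p) (hp1 : p < 1) :
    StrictAntiOn (fun u : ℝ => (u + 1) ^ p - u ^ p) (Set.Ici 0) := by
  refine strictAntiOn_of_deriv_neg (convex_Ici 0) (by fun_prop (disch := positivity)) ?_
  intro x hx
  rw [interior_Ici, Set.mem_Ioi] at hx
  have hderiv : HasDerivAt (fun u : ℝ => (u + 1) ^ p - u ^ p)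
      (1 * p * (x + 1) ^ (p - 1) - 1 * p * x ^ (p - 1)) x :=
    (((hasDerivAt_id x).add_const 1).rpow_const (Or.inl (by positivity))).sub
      ((hasDerivAt_id x).rpow_const (Or.inl hx.ne'))
  have hlt : (x + 1) ^ (p - 1) < x ^ (p - 1) :=
    Real.rpow_lt_rpow_of_neg hx (lt_add_one x) (by linarith)
  rw [hderiv.deriv]
  nlinarith

lemma rpow_sub_rpow_sub_one_lt_one {p v : ℝ} (hp0 : 0 < p) (hp1 : p < 1) (hv : 1 < v) :
    v ^ p - (v - 1) ^ p < 1 := by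
  have h := strictAntiOn_rpow_add_one_sub_rpow hp0 hp1 Set.self_mem_Ici
    (Set.mem_Ici.2 (sub_nonneg.2 hv.le)) (sub_pos.2 hv)
  simpa [Real.zero_rpow hp0.ne'] using h

lemma rpow_sub_rpow_sub_le {p v t x : ℝ} (hp0 : 0 < p) (hp1 : p < 1) (hv : 1 ≤ v) (ht : 0 < t)
    (hx : v * t ≤ x) : x ^ p - (x - t) ^ p ≤ t ^ p * (v ^ p - (v - 1) ^ p) := by
  have hvx : v ≤ x / t := (le_div_iff₀ ht).2 hx
  have hanti := (strictAntiOn_rpow_add_one_sub_rpow hp0 hp1).antitoneOn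
    (Set.mem_Ici.2 (sub_nonneg.2 hv)) (Set.mem_Ici.2 (by linarith : (0:ℝ) ≤ x / t - 1))
    (sub_le_sub_right hvx 1)
  have hscale : x ^ p - (x - t) ^ p = t ^ p * ((x / t) ^ p - (x / t - 1) ^ p) := by
    rw [mul_sub, ← Real.mul_rpow ht.le (by linarith), ← Real.mul_rpow ht.le (by linarith),
      mul_div_cancel₀ _ ht.ne', mul_sub_one, mul_div_cancel₀ _ ht.ne']
  rw [hscale]
  simp only [sub_add_cancel] at hanti
  exact mul_le_mul_of_nonneg_left hanti (by positivity)

lemma monotoneOn_rpow_sub_rpow_sub {q c : ℝ} (hq : q ≤ 0) (hc : 0 ≤ c) :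
    MonotoneOn (fun x : ℝ => x ^ q - (x - c) ^ q) (Set.Ioi c) := by
  have hderiv : ∀ x ∈ Set.Ioi c, HasDerivAt (fun x : ℝ => x ^ q - (x - c) ^ q)
      (1 * q * x ^ (q - 1) - 1 * q * (x - c) ^ (q - 1)) x := fun x hx =>
    ((hasDerivAt_id x).rpow_const (Or.inl (hc.trans_lt hx).ne')).sub
      (((hasDerivAt_id x).sub_const c).rpow_const (Or.inl (sub_pos.2 hx).ne'))
  refine monotoneOn_of_hasDerivWithinAt_nonneg (convex_Ioi c) ?_
    (fun x hx => (hderiv x (interior_subset hx)).hasDerivWithinAt) ?_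
  · exact fun x hx => (hderiv x hx).continuousAt.continuousWithinAt
  · intro x hx
    rw [interior_Ioi, Set.mem_Ioi] at hx
    have hle : x ^ (q - 1) ≤ (x - c) ^ (q - 1) :=
      Real.rpow_le_rpow_of_nonpos (sub_pos.2 hx) (sub_le_self x hc) (by linarith)
    nlinarith

lemma le_sum_Icc_sub_rpow {χ : ℝ} (hχ : χ ≤ 0) (hχ1 : χ ≠ -1) {t i : ℕ} (hti : t < i) :
    ((i : ℝ) ^ (χ + 1) - ((i : ℝ) - t) ^ (χ + 1)) / (χ + 1) ≤ ∑ j ∈ Icc 1 t, ((i : ℝ) - j) ^ χ := by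
  have hti' : (t : ℝ) < i := by exact_mod_cast hti
  have hmono : MonotoneOn (fun y : ℝ => ((i : ℝ) - y) ^ χ) (Set.Icc 0 (0 + t)) := by
    intro y hy z hz hyz
    simp only [Set.mem_Icc, zero_add] at hy hz
    exact Real.rpow_le_rpow_of_nonpos (by linarith) (by linarith) hχ
  have hintegral : ∫ y in (0 : ℝ)..0 + t, ((i : ℝ) - y) ^ χ
      = ((i : ℝ) ^ (χ + 1) - ((i : ℝ) - t) ^ (χ + 1)) / (χ + 1) := by
    rw [intervalIntegral.integral_comp_sub_left (fun u : ℝ => u ^ χ), zero_add, sub_zero,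
      integral_rpow (Or.inr ⟨hχ1, Set.notMem_uIcc_of_lt (by linarith) (by linarith)⟩)]
  have hsum : ∑ k ∈ range t, ((i : ℝ) - (0 + ((k + 1 : ℕ) : ℝ))) ^ χ
      = ∑ j ∈ Icc 1 t, ((i : ℝ) - j) ^ χ := by
    rw [← Finset.Ico_add_one_right_eq_Icc, Finset.sum_Ico_eq_sum_range]
    refine Finset.sum_congr rfl fun k _ => ?_
    push_cast
    ring_nf
  rw [← hintegral, ← hsum]
  exact hmono.integral_le_sum

lemma integral_rpow_sub_rpow_sub_div {p : ℝ} (hp : p < 1) (hp0 : p ≠ 0) {s t : ℕ} (hts : t < s) :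
    ∫ x in ((t + 1 : ℕ) : ℝ)..((s + 1 : ℕ) : ℝ), (x ^ (p - 1) - (x - t) ^ (p - 1)) / (p - 1) =
      (((t : ℝ) + 1) ^ p + ((s : ℝ) + 1 - t) ^ p - ((s : ℝ) + 1) ^ p - 1) / (p * (1 - p)) := by
  have hts' : (t : ℝ) < s := by exact_mod_cast hts
  have hq : p - 1 ≠ -1 := fun h => hp0 (by linarith)
  have hI : (0 : ℝ) ∉ Set.uIcc ((t + 1 : ℕ) : ℝ) ((s + 1 : ℕ) : ℝ) :=
    Set.notMem_uIcc_of_lt (by positivity) (by positivity)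
  have hI' : (0 : ℝ) ∉ Set.uIcc (((t + 1 : ℕ) : ℝ) - t) (((s + 1 : ℕ) : ℝ) - t) :=
    Set.notMem_uIcc_of_lt (by push_cast; linarith) (by push_cast; linarith)
  have hcont : ContinuousOn (fun x : ℝ => (x - t) ^ (p - 1))
      (Set.uIcc ((t + 1 : ℕ) : ℝ) ((s + 1 : ℕ) : ℝ)) := by
    refine (continuousOn_id.sub continuousOn_const).rpow_const fun x hx => Or.inl ?_
    rw [Set.uIcc_of_le (by push_cast; linarith)] at hx
    push_cast at hx
    exact (sub_pos.2 (show (t : ℝ) < x by linarith [hx.1])).ne'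
  rw [intervalIntegral.integral_div, intervalIntegral.integral_sub
      (intervalIntegral.intervalIntegrable_rpow (Or.inr hI)) hcont.intervalIntegrable,
    intervalIntegral.integral_comp_sub_right (fun x : ℝ => x ^ (p - 1)),
    integral_rpow (Or.inr ⟨hq, hI⟩), integral_rpow (Or.inr ⟨hq, hI'⟩)]
  have h1 : (1 : ℝ) - p ≠ 0 := by linarith
  have h2 : p - 1 ≠ 0 := by linarith
  push_cast
  simp only [sub_add_cancel, add_sub_cancel_left, Real.one_rpow]
  field_simp
  ring

lemma le_Cst_rpow {p : ℝ} (hp : p < 1) (hp0 : p ≠ 0) {s t : ℕ} (hts : t < s) :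
    (((t : ℝ) + 1) ^ p + ((s : ℝ) + 1 - t) ^ p - ((s : ℝ) + 1) ^ p - 1) / (p * (1 - p))
      ≤ Cst (fun k : ℤ => (k : ℝ) ^ (p - 2)) s t := by
  have hIoi : Set.Icc ((t + 1 : ℕ) : ℝ) ((s + 1 : ℕ) : ℝ) ⊆ Set.Ioi (t : ℝ) := fun z hz => by
    push_cast at hz
    exact Set.mem_Ioi.2 (by linarith [hz.1])
  have hanti : AntitoneOn (fun x : ℝ => (x ^ (p - 1) - (x - t) ^ (p - 1)) / (p - 1))
      (Set.Icc ((t + 1 : ℕ) : ℝ) ((s + 1 : ℕ) : ℝ)) := fun x hx y hy hxy => div_le_div_of_nonpos_of_le (by linarith) <|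
      monotoneOn_rpow_sub_rpow_sub (by linarith) (Nat.cast_nonneg t) (hIoi hx) (hIoi hy) hxy
  rw [← integral_rpow_sub_rpow_sub_div hp hp0 hts]
  refine (hanti.integral_le_sum_Ico (by omega)).trans ?_
  rw [Cst, Finset.Ico_add_one_right_eq_Icc]
  refine Finset.sum_le_sum fun i hi => ?_
  have hχ1 : p - 2 ≠ -1 := fun h => hp0 (by linarith)
  have h := le_sum_Icc_sub_rpow (χ := p - 2) (by linarith) hχ1 (t := t) (i := i)
    (by rw [mem_Icc] at hi; omega)
  rw [show p - 2 + 1 = p - 1 by ring] at h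
  push_cast
  exact h

lemma le_Cst_rpow_of_lt_div {p v : ℝ} (hp0 : 0 < p) (hp1 : p < 1) (hv : 1 < v) {s t : ℕ}
    (ht : 0 < t) (hvst : v < s / t) :
    ((t : ℝ) ^ p * (1 - (v ^ p - (v - 1) ^ p)) - 1) / (p * (1 - p))
      ≤ Cst (fun k : ℤ => (k : ℝ) ^ (p - 2)) s t := by
  have ht' : (0 : ℝ) < t := by exact_mod_cast ht
  have hvts : v * t < s := (lt_div_iff₀ ht').1 hvst
  have hts : t < s := by exact_mod_cast (show (t : ℝ) < s by nlinarith)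
  refine le_trans ?_ (le_Cst_rpow hp1 hp0.ne' hts)
  have hincr := rpow_sub_rpow_sub_le hp0 hp1 hv.le ht' (x := s + 1) (by linarith)
  have hmono : (t : ℝ) ^ p ≤ (t + 1) ^ p := Real.rpow_le_rpow ht'.le (by linarith) hp0.le
  refine div_le_div_of_nonneg_right ?_ (by nlinarith)
  rw [mul_one_sub]
  linarith

lemma card_filter_sub_lt_le (T0 t s : ℕ) :
    #((Icc (t + 1) s ×ˢ Icc 1 t).filter fun ij : ℕ × ℕ => (ij.1 : ℤ) - ij.2 < T0) ≤ T0 * T0 := by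
  calc _ ≤ #(range T0 ×ˢ range T0) := by
        refine card_le_card_of_injOn (fun ij : ℕ × ℕ => (ij.1 - t, ij.1 - ij.2)) ?_ ?_
        · rintro ⟨i, j⟩ hij
          simp only [coe_filter, mem_product, mem_Icc, Set.mem_ofPred_eq] at hij
          simp only [coe_product, coe_range, Set.mem_prod, Set.mem_Iio]
          omega
        · rintro ⟨i, j⟩ hij ⟨i', j'⟩ hij' h
          simp only [coe_filter, mem_product, mem_Icc, Set.mem_ofPred_eq] at hij hij'
          simp only [Prod.mk.injEq] at h ⊢
          omega
    _ = T0 * T0 := by simp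

lemma exists_Cst_le_of_nonpos (f : ℤ → ℝ) (T0 : ℕ) (hf : ∀ k : ℤ, (T0 : ℤ) ≤ k → f k ≤ 0) :
    ∃ D, ∀ s t, Cst f s t ≤ D := by
  set B := ∑ k ∈ Ico (0 : ℤ) T0, |f k|
  refine ⟨T0 * T0 * B, fun s t => ?_⟩
  have hterm : ∀ ij ∈ Icc (t + 1) s ×ˢ Icc 1 t,
      f (ij.1 - ij.2) ≤ if (ij.1 : ℤ) - ij.2 < T0 then B else 0 := by
    rintro ⟨i, j⟩ hij
    simp only [mem_product, mem_Icc] at hij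
    split_ifs with h
    · exact (le_abs_self _).trans <| single_le_sum (fun k _ => abs_nonneg (f k))
        (mem_Ico.2 ⟨by omega, h⟩)
    · exact hf _ (not_lt.1 h)
  calc Cst f s t = ∑ ij ∈ Icc (t + 1) s ×ˢ Icc 1 t, f (ij.1 - ij.2) := by rw [Cst, sum_product]
    _ ≤ ∑ ij ∈ Icc (t + 1) s ×ˢ Icc 1 t, if (ij.1 : ℤ) - ij.2 < T0 then B else 0 :=
        sum_le_sum hterm
    _ ≤ T0 * T0 * B := by
        rw [← sum_filter, sum_const, nsmul_eq_mul]
        exact mul_le_mul_of_nonneg_right (by exact_mod_cast card_filter_sub_lt_le T0 t s)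
          (sum_nonneg fun k _ => abs_nonneg (f k))

lemma Cst_add_mul (f g : ℤ → ℝ) (c : ℝ) (s t : ℕ) :
    Cst (fun k => f k + c * g k) s t = Cst f s t + c * Cst g s t := by
  simp only [Cst, sum_add_distrib, mul_sum]

theorem covariance_negative_bound_general
    (r : ℤ → ℝ)
    (T0 : ℕ)
    (J1 J2 χ : ℝ) (hJ2 : J2 < 0)
    (hχ : χ ∈ Set.Ioo (-2 : ℝ) (-1))
    (hbound : ∀ t : ℤ, (T0 : ℤ) ≤ t →
      J1 * (t : ℝ) ^ χ ≤ r t ∧ r t ≤ J2 * (t : ℝ) ^ χ)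
    (H : ℝ) (hH : H = χ / 2 + 1)
    (v : ℝ) (hv : 1 < v) :
    ∃ (T3 : ℕ) (D2 : ℝ), 0 < D2 ∧
      ∀ s t : ℕ, T3 < t → t < s → v < (s : ℝ) / (t : ℝ) →
        Cst r s t ≤ D2 - (J2 * (2 * H)⁻¹ * (2 * H - 1)⁻¹ * (1 - (v ^ (2 * H) - (v - 1) ^ (2 * H)))) * (t : ℝ) ^ (2 * H) ∧
        D2 - (J2 * (2 * H)⁻¹ * (2 * H - 1)⁻¹ * (1 - (v ^ (2 * H) - (v - 1) ^ (2 * H)))) * (t : ℝ) ^ (2 * H) < 0 := by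
  obtain ⟨hχ2, hχ1⟩ := hχ
  have hχH : χ = 2 * H - 2 := by rw [hH]; ring
  set p := 2 * H
  have hp0 : 0 < p := by linarith
  have hp1 : p < 1 := by linarith
  set ψ := v ^ p - (v - 1) ^ p
  have hψ : ψ < 1 := rpow_sub_rpow_sub_one_lt_one hp0 hp1 hv
  have hU : J2 * p⁻¹ * (p - 1)⁻¹ * (1 - ψ) = -J2 * (1 - ψ) / (p * (1 - p)) := by
    have : 1 - p ≠ 0 := by linarith
    field_simp [show p - 1 ≠ 0 by linarith]
    ring
  rw [hU]
  set U := -J2 * (1 - ψ) / (p * (1 - p))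
  have hU0 : 0 < U := div_pos (by nlinarith) (by nlinarith)
  obtain ⟨D, hD⟩ := exists_Cst_le_of_nonpos (fun k => r k - J2 * (k : ℝ) ^ χ) T0
    fun k hk => sub_nonpos.2 (hbound k hk).2
  set D2 := max D 0 - J2 / (p * (1 - p)) + 1
  have hD2 : 0 < D2 := by
    have : J2 / (p * (1 - p)) < 0 := div_neg_of_neg_of_pos hJ2 (by nlinarith)
    linarith [le_max_right D 0]
  obtain ⟨T3, hT3⟩ := Filter.eventually_atTop.1 <|
    ((tendsto_rpow_atTop hp0).comp tendsto_natCast_atTop_atTop).eventually_gt_atTop (D2 / U)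
  refine ⟨T3, D2, hD2, fun s t hT3t _ hvst => ⟨?_, ?_⟩⟩
  · have hsplit : Cst r s t = Cst (fun k => r k - J2 * (k : ℝ) ^ χ) s t
        + J2 * Cst (fun k : ℤ => (k : ℝ) ^ (p - 2)) s t := by
      rw [← Cst_add_mul, hχH]
      simp
    have hlow := le_Cst_rpow_of_lt_div hp0 hp1 hv (by omega) hvst
    calc Cst r s t ≤ D + J2 * (((t : ℝ) ^ p * (1 - ψ) - 1) / (p * (1 - p))) := by
          rw [hsplit]
          exact add_le_add (hD s t) (mul_le_mul_of_nonpos_left hlow hJ2.le)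
      _ = D - J2 / (p * (1 - p)) - U * (t : ℝ) ^ p := by ring
      _ ≤ D2 - U * (t : ℝ) ^ p := by linarith [le_max_left D 0]
  · have h := (div_lt_iff₀ hU0).1 (hT3 t hT3t.le)
    simp only [Function.comp_apply] at h
    linarith

theorem covariance_negative_bound
    (r : ℤ → ℝ) (hEven : ∀ t : ℤ, r (-t) = r t)
    (hAbsSum : Summable fun t : ℤ => |r t|)
    (hSumZero : ∑' t : ℤ, r t = 0)
    (T0 : ℕ) (hT0 : 2 ≤ T0)
    (J1 J2 χ : ℝ) (hJ12 : J1 ≤ J2) (hJ2 : J2 < 0)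
    (hχ : χ ∈ Set.Ioo (-2 : ℝ) (-1))
    (hbound : ∀ t : ℤ, (T0 : ℤ) ≤ t →
      J1 * (t : ℝ) ^ χ ≤ r t ∧ r t ≤ J2 * (t : ℝ) ^ χ)
    (H : ℝ) (hH : H = χ / 2 + 1)
    (v : ℝ) (hv : 1 < v) :
    ∃ (T3 : ℕ) (D2 : ℝ), 0 < D2 ∧
      ∀ s t : ℕ, T3 < t → t < s → v < (s : ℝ) / (t : ℝ) →
        Cst r s t ≤ D2 - (J2 * (2 * H)⁻¹ * (2 * H - 1)⁻¹ * (1 - (v ^ (2 * H) - (v - 1) ^ (2 * H)))) * (t : ℝ) ^ (2 * H) ∧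
        D2 - (J2 * (2 * H)⁻¹ * (2 * H - 1)⁻¹ * (1 - (v ^ (2 * H) - (v - 1) ^ (2 * H)))) * (t : ℝ) ^ (2 * H) < 0 :=
  covariance_negative_bound_general r T0 J1 J2 χ hJ2 hχ hbound H hH v hv
end

section
/- There exist a real constant K > 1 and a natural number T4 such that for all integers s > t > T4 with s − t > K one has C(s,t) ≤ 0. -/
/-!
Group the double sum defining `C(s, t)` by the row `i = t + u`: row `u` is the sum of `r` over
the lags `u, …, u + t - 1`. From the lag `T0` on, `r` is negative, so each row is bounded by
the constant `∑_{k < T0} |r k|`, rows with `u ≥ T0` are nonpositive, and for `T0 ≤ u ≤ t`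
the row is at most the contribution of the `u` lags in `[u, 2u)`, which is at most
`u · J2 (2u)^χ ≤ J2 2^χ / u` because `χ ≥ -2`. The divergence of the harmonic series lets the rows `T0 < u ≤ N` outweigh the
first `T0` rows once `N` is large; this `N` serves both as `K` and as `T4`.
-/

open Finset MeasureTheory ProbabilityTheory

open Filter

theorem Cst_add_eq_sum_Ioc_sum_Ico (r : ℤ → ℝ) (t n : ℕ) :
    Cst r (t + n) t = ∑ u ∈ Ioc 0 n, ∑ k ∈ Ico u (u + t), r k := by
  refine sum_nbij' (· - t) (· + t) (by simp only [mem_Icc, mem_Ioc]; omega)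
    (by simp only [mem_Icc, mem_Ioc]; omega) (by simp only [mem_Icc]; omega)
    (fun _ _ => Nat.add_sub_cancel _ _) fun i hi => ?_
  simp only [mem_Icc] at hi
  refine sum_nbij' (i - ·) (i - ·) (by simp only [mem_Icc, mem_Ico]; omega)
    (by simp only [mem_Icc, mem_Ico]; omega) (by simp only [mem_Icc]; omega)
    (by simp only [mem_Ico]; omega) fun j hj => ?_
  simp only [mem_Icc] at hj
  congr 1
  omega

theorem tendsto_sum_Ioc_one_div_atTop (M : ℕ) :
    Tendsto (fun N : ℕ => ∑ u ∈ Ioc M N, (1 / u : ℝ)) atTop atTop := by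
  refine (tendsto_atTop_add_const_right _ (-∑ u ∈ range (M + 1), (1 / u : ℝ))
    Real.tendsto_sum_range_one_div_nat_succ_atTop).congr' ?_
  filter_upwards [eventually_ge_atTop M] with N hN
  -- the `u = 0` term of the sum over `range (N + 1)` is `1 / 0 = 0`
  rw [← Ico_add_one_add_one_eq_Ioc, sum_Ico_eq_sub _ (by omega), sum_range_succ' _ N]
  simp only [Nat.cast_add, Nat.cast_one, Nat.cast_zero, div_zero, add_zero]
  ring

section LagSums

variable {f : ℕ → ℝ} {T : ℕ}

theorem sum_le_sum_range_abs (hf : ∀ k, T ≤ k → f k ≤ 0) (s : Finset ℕ) :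
    ∑ k ∈ s, f k ≤ ∑ k ∈ range T, |f k| := by
  rw [← sum_filter_add_sum_filter_not s (· < T)]
  have hfar : ∑ k ∈ s with ¬k < T, f k ≤ 0 :=
    sum_nonpos fun k hk => hf k (not_lt.mp (mem_filter.mp hk).2)
  have hnear : ∑ k ∈ s with k < T, f k ≤ ∑ k ∈ range T, |f k| :=
    calc ∑ k ∈ s with k < T, f k ≤ ∑ k ∈ s with k < T, |f k| :=
          sum_le_sum fun k _ => le_abs_self _
      _ ≤ ∑ k ∈ range T, |f k| :=
          sum_le_sum_of_subset_of_nonneg (fun k hk => mem_range.mpr (mem_filter.mp hk).2)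
            fun k _ _ => abs_nonneg _
  linarith

variable {J χ : ℝ}

theorem nonpos_of_le_mul_rpow (hJ : J < 0) (hf : ∀ k, T ≤ k → f k ≤ J * (k : ℝ) ^ χ) :
    ∀ k, T ≤ k → f k ≤ 0 :=
  fun k hk => (hf k hk).trans
    (mul_nonpos_of_nonpos_of_nonneg hJ.le (Real.rpow_nonneg (Nat.cast_nonneg k) χ))

theorem sum_Ico_add_le_div (hJ : J < 0) (hχ : χ ∈ Set.Icc (-2) 0)
    (hf : ∀ k, T ≤ k → f k ≤ J * (k : ℝ) ^ χ) {u t : ℕ} (hTu : T ≤ u) (hu : 0 < u)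
    (hut : u ≤ t) :
    ∑ k ∈ Ico u (u + t), f k ≤ J * 2 ^ χ / u := by
  have hu' : (0 : ℝ) < u := by exact_mod_cast hu
  rw [← sum_Ico_consecutive f (show u ≤ 2 * u by omega) (show 2 * u ≤ u + t by omega)]
  have htail : ∑ k ∈ Ico (2 * u) (u + t), f k ≤ 0 :=
    sum_nonpos fun k hk => nonpos_of_le_mul_rpow hJ hf k (by simp only [mem_Ico] at hk; omega)
  have hterm : ∀ k ∈ Ico u (2 * u), f k ≤ J * (2 * u : ℝ) ^ χ := by
    intro k hk
    simp only [mem_Ico] at hk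
    refine (hf k (by omega)).trans (mul_le_mul_of_nonpos_left ?_ hJ.le)
    exact Real.rpow_le_rpow_of_nonpos (by exact_mod_cast (by omega : 0 < k))
      (by exact_mod_cast (by omega : k ≤ 2 * u)) hχ.2
  have hpow : (u : ℝ) ^ (-1 : ℝ) ≤ (u : ℝ) ^ (χ + 1) :=
    Real.rpow_le_rpow_of_exponent_le (by exact_mod_cast hu) (by linarith [hχ.1])
  have hc : J * 2 ^ χ < 0 := mul_neg_of_neg_of_pos hJ (by positivity)
  have hhead : ∑ k ∈ Ico u (2 * u), f k ≤ J * 2 ^ χ / u :=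
    calc ∑ k ∈ Ico u (2 * u), f k ≤ u * (J * (2 * u : ℝ) ^ χ) := by
          simpa [show 2 * u - u = u by omega] using sum_le_sum hterm
      _ = J * 2 ^ χ * (u : ℝ) ^ (χ + 1) := by
          rw [Real.mul_rpow (by norm_num) hu'.le, Real.rpow_add_one hu'.ne']
          ring
      _ ≤ J * 2 ^ χ * (u : ℝ) ^ (-1 : ℝ) := mul_le_mul_of_nonpos_left hpow hc.le
      _ = J * 2 ^ χ / u := by rw [Real.rpow_neg_one, div_eq_mul_inv]
  linarith

theorem exists_forall_sum_Ioc_sum_Ico_nonpos (hJ : J < 0)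
    (hχ : χ ∈ Set.Icc (-2) 0) (hf : ∀ k, T ≤ k → f k ≤ J * (k : ℝ) ^ χ) :
    ∃ N, T ≤ N ∧ ∀ t n, N ≤ t → N < n → ∑ u ∈ Ioc 0 n, ∑ k ∈ Ico u (u + t), f k ≤ 0 := by
  set A := ∑ k ∈ range T, |f k|
  have hc : J * 2 ^ χ < 0 := mul_neg_of_neg_of_pos hJ (by positivity)
  obtain ⟨N, hNsum, hTN⟩ := ((tendsto_atTop.mp (tendsto_sum_Ioc_one_div_atTop T)
    (T * A / -(J * 2 ^ χ))).and (eventually_ge_atTop T)).exists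
  refine ⟨N, hTN, fun t n hNt hNn => ?_⟩
  rw [← sum_Ioc_consecutive _ (Nat.zero_le T) (hTN.trans hNn.le),
    ← sum_Ioc_consecutive _ hTN hNn.le]
  have hnear : ∑ u ∈ Ioc 0 T, ∑ k ∈ Ico u (u + t), f k ≤ T * A := by
    simpa using sum_le_card_nsmul (Ioc 0 T) _ _
      fun u _ => sum_le_sum_range_abs (nonpos_of_le_mul_rpow hJ hf) (Ico u (u + t))
  have hmid : ∑ u ∈ Ioc T N, ∑ k ∈ Ico u (u + t), f k
      ≤ J * 2 ^ χ * ∑ u ∈ Ioc T N, (1 / u : ℝ) := by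
    rw [mul_sum]
    refine sum_le_sum fun u hu => ?_
    simp only [mem_Ioc] at hu
    simpa [div_eq_mul_inv] using sum_Ico_add_le_div hJ hχ hf hu.1.le (by omega) (by omega)
  have hfar : ∑ u ∈ Ioc N n, ∑ k ∈ Ico u (u + t), f k ≤ 0 :=
    sum_nonpos fun u hu => sum_nonpos fun k hk =>
      nonpos_of_le_mul_rpow hJ hf k (by simp only [mem_Ioc, mem_Ico] at hu hk; omega)
  have hbalance : T * A + J * 2 ^ χ * ∑ u ∈ Ioc T N, (1 / u : ℝ) ≤ 0 := by
    rw [div_le_iff₀ (by linarith)] at hNsum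
    linarith
  linarith

end LagSums

theorem covariance_nonpos_general
    (r : ℤ → ℝ)
    (T0 : ℕ) (hT0 : 2 ≤ T0)
    (J1 J2 χ : ℝ) (hJ2 : J2 < 0)
    (hχ : χ ∈ Set.Ioo (-2 : ℝ) (-1))
    (hbound : ∀ t : ℤ, (T0 : ℤ) ≤ t →
      J1 * (t : ℝ) ^ χ ≤ r t ∧ r t ≤ J2 * (t : ℝ) ^ χ) :
    ∃ (K : ℝ), 1 < K ∧ ∃ (T4 : ℕ),
      ∀ s t : ℕ, T4 < t → t < s → K < (s : ℝ) - (t : ℝ) → Cst r s t ≤ 0 := by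
  have hr : ∀ k : ℕ, T0 ≤ k → r k ≤ J2 * (k : ℝ) ^ χ := fun k hk => by
    simpa using (hbound k (by exact_mod_cast hk)).2
  obtain ⟨N, hTN, hN⟩ := exists_forall_sum_Ioc_sum_Ico_nonpos hJ2
    ⟨hχ.1.le, by linarith [hχ.2]⟩ hr
  refine ⟨N, by exact_mod_cast (by omega : 1 < N), N, fun s t hNt hts hK => ?_⟩
  obtain ⟨n, rfl⟩ := Nat.exists_eq_add_of_le hts.le
  rw [Cst_add_eq_sum_Ioc_sum_Ico]
  exact hN t n hNt.le (by push_cast at hK; exact_mod_cast (by linarith : (N : ℝ) < n))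

theorem covariance_nonpos
    (r : ℤ → ℝ) (hEven : ∀ t : ℤ, r (-t) = r t)
    (hAbsSum : Summable fun t : ℤ => |r t|)
    (hSumZero : ∑' t : ℤ, r t = 0)
    (T0 : ℕ) (hT0 : 2 ≤ T0)
    (J1 J2 χ : ℝ) (hJ12 : J1 ≤ J2) (hJ2 : J2 < 0)
    (hχ : χ ∈ Set.Ioo (-2 : ℝ) (-1))
    (hbound : ∀ t : ℤ, (T0 : ℤ) ≤ t →
      J1 * (t : ℝ) ^ χ ≤ r t ∧ r t ≤ J2 * (t : ℝ) ^ χ)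
    (H : ℝ) (hH : H = χ / 2 + 1) :
    ∃ (K : ℝ), 1 < K ∧ ∃ (T4 : ℕ),
      ∀ s t : ℕ, T4 < t → t < s → K < (s : ℝ) - (t : ℝ) → Cst r s t ≤ 0 :=
  covariance_nonpos_general r T0 hT0 J1 J2 χ hJ2 hχ hbound
end

section
/- There exists a constant R > 0 such that for all integers s > t ≥ 1 one has ρ(s,t) < 1 + R. -/
/-!
Abel summation and `∑ r = 0` (with `r` even) give
`V t = -2 t ∑_{k ≥ t} r k - 2 ∑_{k < t} k r k`. For `t ≥ T0` the first term is nonnegative and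
the second grows like `t ^ (χ + 2)`, so `V → ∞`; being positive, `V` is then bounded below on
`t ≥ 1` by some `v > 0`. In `C(s, t) = ∑_j ∑_i r (i - j)` only the fewer than `T0` columns with
`t + 1 - j < T0` can contribute positively, each by at most `∑ |r|`, so `C(s, t) ≤ T0 ∑ |r|`
and `ρ(s, t) - 1 ≤ T0 ∑ |r| / v`.
-/

open Finset MeasureTheory ProbabilityTheory

open Filter

variable {r : ℤ → ℝ}

lemma sum_Icc_succ_sub_eq_sum_range (t : ℕ) :
    ∑ j ∈ Icc 1 t, r ((t + 1 : ℕ) - j) = ∑ k ∈ range t, r (k + 1 : ℕ) :=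
  sum_nbij' (t - ·) (t - ·) (by intro a; simp only [mem_Icc, mem_range]; omega)
    (by intro a; simp only [mem_Icc, mem_range]; omega)
    (by intro a; simp only [mem_Icc]; omega) (by intro a; simp only [mem_range]; omega)
    (by intro a ha; rw [mem_Icc] at ha; congr 1; omega)

lemma V_succ (t : ℕ) : V r (t + 1) = V r t + 2 * ∑ k ∈ range (t + 1), r k - r 0 := by
  have hIcc : ∑ i ∈ Icc 2 (t + 1), ∑ j ∈ Icc 1 (i - 1), r ((i : ℤ) - (j : ℤ)) =
      ∑ i ∈ Icc 2 t, ∑ j ∈ Icc 1 (i - 1), r ((i : ℤ) - (j : ℤ)) +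
        ∑ k ∈ range t, r (k + 1 : ℕ) := by
    rcases Nat.eq_zero_or_pos t with rfl | ht
    · simp
    · rw [sum_Icc_succ_top (by omega), Nat.add_sub_cancel, sum_Icc_succ_sub_eq_sum_range]
  rw [V, V, hIcc, sum_range_succ']
  push_cast
  ring

lemma V_eq_sum_range (t : ℕ) :
    V r t = 2 * ∑ k ∈ range t, ((t : ℝ) - k) * r k - t * r 0 := by
  induction t with
  | zero => simp [V]
  | succ t ih =>
    rw [V_succ, ih]
    simp only [sum_range_succ, Nat.cast_add, Nat.cast_one, add_sub_right_comm _ (1 : ℝ), add_mul,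
      sum_add_distrib, one_mul]
    ring

lemma tsum_nat_eq_half_of_even (hEven : ∀ t, r (-t) = r t) (hr : Summable r) :
    ∑' n : ℕ, r n = (∑' t, r t + r 0) / 2 := by
  have h := tsum_nat_add_neg hr
  simp only [hEven, ← two_mul, tsum_mul_left] at h
  linarith

lemma V_eq_of_tsum_eq_zero (hEven : ∀ t, r (-t) = r t) (hr : Summable r) (h0 : ∑' t, r t = 0)
    (t : ℕ) :
    V r t = -2 * t * ∑' k : ℕ, r (k + t : ℕ) - 2 * ∑ k ∈ range t, (k : ℝ) * r k := by
  have htail := (hr.comp_injective Nat.cast_injective).sum_add_tsum_nat_add t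
  simp only [Function.comp_def, tsum_nat_eq_half_of_even hEven hr, h0, zero_add] at htail
  simp only [V_eq_sum_range, sub_mul, sum_sub_distrib, ← mul_sum]
  linear_combination (2 * t : ℝ) * htail

lemma neg_two_mul_sum_le_V (hEven : ∀ t, r (-t) = r t) (hr : Summable r) (h0 : ∑' t, r t = 0)
    {T0 t : ℕ} (hneg : ∀ k : ℤ, (T0 : ℤ) ≤ k → r k ≤ 0) (ht : T0 ≤ t) :
    -2 * ∑ k ∈ range t, (k : ℝ) * r k ≤ V r t := by
  have htail : ∑' k : ℕ, r (k + t : ℕ) ≤ 0 := tsum_nonpos fun k => hneg _ (by omega)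
  rw [V_eq_of_tsum_eq_zero hEven hr h0]
  nlinarith [(Nat.cast_nonneg t : (0 : ℝ) ≤ t)]

lemma sum_Ico_mul_le_rpow {T0 t : ℕ} {J χ : ℝ} (hT0 : 0 < T0) (hχ : χ ≤ -1) (hJ : J ≤ 0)
    (hdecay : ∀ k : ℤ, (T0 : ℤ) ≤ k → r k ≤ J * (k : ℝ) ^ χ) (ht : 2 * T0 ≤ t) :
    ∑ k ∈ Ico T0 t, (k : ℝ) * r k ≤ J / 2 * (t : ℝ) ^ (χ + 2) := by
  have htpos : (0 : ℝ) < t := by norm_cast; omega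
  have hterm : ∀ k ∈ Ico T0 t, (k : ℝ) * r k ≤ J * (t : ℝ) ^ (χ + 1) := by
    intro k hk
    rw [mem_Ico] at hk
    have hkpos : (0 : ℝ) < k := by norm_cast; omega
    calc (k : ℝ) * r k ≤ k * (J * (k : ℝ) ^ χ) := by gcongr; exact_mod_cast hdecay k (by omega)
      _ = J * (k : ℝ) ^ (χ + 1) := by rw [Real.rpow_add_one hkpos.ne']; ring
      _ ≤ J * (t : ℝ) ^ (χ + 1) :=
        mul_le_mul_of_nonpos_left
          (Real.rpow_le_rpow_of_nonpos hkpos (by exact_mod_cast hk.2.le) (by linarith)) hJ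
  have hhalf : (t : ℝ) / 2 ≤ ((t - T0 : ℕ) : ℝ) := by
    rw [Nat.cast_sub (by omega)]
    have : (2 * T0 : ℝ) ≤ t := by exact_mod_cast ht
    linarith
  calc ∑ k ∈ Ico T0 t, (k : ℝ) * r k ≤ ((t - T0 : ℕ) : ℝ) * (J * (t : ℝ) ^ (χ + 1)) := by
        simpa using sum_le_card_nsmul _ _ _ hterm
    _ ≤ t / 2 * (J * (t : ℝ) ^ (χ + 1)) :=
        mul_le_mul_of_nonpos_right hhalf (mul_nonpos_of_nonpos_of_nonneg hJ (by positivity))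
    _ = J / 2 * (t : ℝ) ^ (χ + 2) := by
        rw [show χ + 2 = χ + 1 + 1 by ring, Real.rpow_add_one htpos.ne' (χ + 1)]; ring

lemma nonpos_of_le_mul_rpow_s5 {T0 : ℕ} {J χ : ℝ} (hJ : J ≤ 0)
    (hdecay : ∀ k : ℤ, (T0 : ℤ) ≤ k → r k ≤ J * (k : ℝ) ^ χ) (k : ℤ) (hk : (T0 : ℤ) ≤ k) :
    r k ≤ 0 :=
  (hdecay k hk).trans <| mul_nonpos_of_nonpos_of_nonneg hJ <|
    Real.rpow_nonneg (by exact_mod_cast (Int.natCast_nonneg T0).trans hk) χ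

lemma tendsto_V_atTop (hEven : ∀ t, r (-t) = r t) (hr : Summable r) (h0 : ∑' t, r t = 0)
    {T0 : ℕ} {J χ : ℝ} (hT0 : 0 < T0) (hχ : χ ∈ Set.Ioo (-2 : ℝ) (-1)) (hJ : J < 0)
    (hdecay : ∀ k : ℤ, (T0 : ℤ) ≤ k → r k ≤ J * (k : ℝ) ^ χ) :
    Tendsto (V r) atTop atTop := by
  set D := -2 * ∑ k ∈ range T0, (k : ℝ) * r k
  have hlower : ∀ᶠ t : ℕ in atTop, D + -J * (t : ℝ) ^ (χ + 2) ≤ V r t := by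
    filter_upwards [eventually_ge_atTop (2 * T0)] with t ht
    have hsplit := sum_range_add_sum_Ico (fun k => (k : ℝ) * r k) (by omega : T0 ≤ t)
    have hV := neg_two_mul_sum_le_V hEven hr h0 (nonpos_of_le_mul_rpow_s5 hJ.le hdecay)
      (by omega : T0 ≤ t)
    have hIco := sum_Ico_mul_le_rpow hT0 hχ.2.le hJ.le hdecay ht
    linarith
  refine tendsto_atTop_mono' _ hlower (tendsto_atTop_add_const_left _ D ?_)
  exact ((tendsto_rpow_atTop (by linarith [hχ.1])).comp
    tendsto_natCast_atTop_atTop).const_mul_atTop (neg_pos.2 hJ)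

lemma exists_pos_forall_le_of_tendsto_atTop {f : ℕ → ℝ} (hf : Tendsto f atTop atTop)
    (hpos : ∀ t, 1 ≤ t → 0 < f t) : ∃ v > 0, ∀ t, 1 ≤ t → v ≤ f t := by
  have hshift : Tendsto (fun n => f (n + 1)) cofinite atTop := by
    rwa [Nat.cofinite_eq_atTop, tendsto_add_atTop_iff_nat]
  obtain ⟨n, hn⟩ := hshift.exists_forall_le
  refine ⟨f (n + 1), hpos _ le_add_self, fun t ht => ?_⟩
  obtain ⟨m, rfl⟩ := Nat.exists_eq_add_of_le' ht
  exact hn m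

lemma sum_comp_sub_le_tsum_abs (hr : Summable fun k => |r k|) (s : Finset ℕ) (j : ℤ) :
    ∑ i ∈ s, r (i - j) ≤ ∑' k, |r k| := by
  have hinj : Function.Injective fun i : ℕ => (i : ℤ) - j := fun a b h => by simpa using h
  calc ∑ i ∈ s, r (i - j) ≤ ∑ i ∈ s, |r (i - j)| := sum_le_sum fun i _ => le_abs_self _
    _ ≤ ∑' i : ℕ, |r (i - j)| :=
        (hr.comp_injective hinj).sum_le_tsum s fun i _ => abs_nonneg _
    _ ≤ ∑' k, |r k| := tsum_comp_le_tsum_of_inj hr (fun _ => abs_nonneg _) hinj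

lemma Cst_le_mul_tsum_abs (hr : Summable fun k => |r k|) {T0 : ℕ}
    (hneg : ∀ k : ℤ, (T0 : ℤ) ≤ k → r k ≤ 0) (s t : ℕ) : Cst r s t ≤ T0 * ∑' k, |r k| := by
  rw [Cst, sum_comm, ← sum_filter_add_sum_filter_not _ (fun j => j + T0 ≤ t + 1)]
  have hfar : ∑ j ∈ (Icc 1 t).filter (fun j => j + T0 ≤ t + 1),
      ∑ i ∈ Icc (t + 1) s, r (i - j) ≤ 0 :=
    sum_nonpos fun j hj => sum_nonpos fun i hi => hneg _ <| by
      simp only [mem_filter, mem_Icc] at hj hi; omega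
  have hcard : ((Icc 1 t).filter (fun j => ¬j + T0 ≤ t + 1)).card ≤ T0 := by
    calc _ ≤ (Ioc (t - T0) t).card := card_le_card fun j hj => by
            simp only [mem_filter, mem_Icc, mem_Ioc] at hj ⊢; omega
      _ ≤ T0 := by rw [Nat.card_Ioc]; omega
  have hnear : ∑ j ∈ (Icc 1 t).filter (fun j => ¬j + T0 ≤ t + 1),
      ∑ i ∈ Icc (t + 1) s, r (i - j) ≤ T0 * ∑' k, |r k| := by
    refine (sum_le_card_nsmul _ _ _ fun j _ => sum_comp_sub_le_tsum_abs hr _ _).trans ?_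
    rw [nsmul_eq_mul]
    gcongr
  linarith

theorem rho_upper_bound_general
    (r : ℤ → ℝ) (hEven : ∀ t : ℤ, r (-t) = r t)
    (hAbsSum : Summable fun t : ℤ => |r t|)
    (hSumZero : ∑' t : ℤ, r t = 0)
    (T0 : ℕ) (hT0 : 2 ≤ T0)
    (J1 J2 χ : ℝ) (hJ2 : J2 < 0)
    (hχ : χ ∈ Set.Ioo (-2 : ℝ) (-1))
    (hbound : ∀ t : ℤ, (T0 : ℤ) ≤ t →
      J1 * (t : ℝ) ^ χ ≤ r t ∧ r t ≤ J2 * (t : ℝ) ^ χ)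
    (hVpos : ∀ t : ℕ, 1 ≤ t → 0 < V r t) :
    ∃ R : ℝ, 0 < R ∧
      ∀ s t : ℕ, 1 ≤ t → t < s → Cst r s t / V r t + 1 < 1 + R := by
  have hupper : ∀ k : ℤ, (T0 : ℤ) ≤ k → r k ≤ J2 * (k : ℝ) ^ χ := fun k hk => (hbound k hk).2
  obtain ⟨v, hv, hvV⟩ := exists_pos_forall_le_of_tendsto_atTop
    (tendsto_V_atTop hEven hAbsSum.of_abs hSumZero (by omega) hχ hJ2 hupper) hVpos
  set A := ∑' k, |r k|
  refine ⟨T0 * A / v + 1, by positivity, fun s t ht _ => ?_⟩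
  have hCst := Cst_le_mul_tsum_abs hAbsSum (nonpos_of_le_mul_rpow_s5 hJ2.le hupper) s t
  have := div_le_div₀ (by positivity) hCst hv (hvV t ht)
  linarith

theorem rho_upper_bound
    (r : ℤ → ℝ) (hEven : ∀ t : ℤ, r (-t) = r t)
    (hAbsSum : Summable fun t : ℤ => |r t|)
    (hSumZero : ∑' t : ℤ, r t = 0)
    (T0 : ℕ) (hT0 : 2 ≤ T0)
    (J1 J2 χ : ℝ) (hJ12 : J1 ≤ J2) (hJ2 : J2 < 0)
    (hχ : χ ∈ Set.Ioo (-2 : ℝ) (-1))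
    (hbound : ∀ t : ℤ, (T0 : ℤ) ≤ t →
      J1 * (t : ℝ) ^ χ ≤ r t ∧ r t ≤ J2 * (t : ℝ) ^ χ)
    (H : ℝ) (hH : H = χ / 2 + 1)
    (hVpos : ∀ t : ℕ, 1 ≤ t → 0 < V r t) :
    ∃ R : ℝ, 0 < R ∧
      ∀ s t : ℕ, 1 ≤ t → t < s → Cst r s t / V r t + 1 < 1 + R :=
  rho_upper_bound_general r hEven hAbsSum hSumZero T0 hT0 J1 J2 χ hJ2 hχ hbound hVpos
end

section
/- There exist a natural number T̄ and a real constant K > 1 such that for all integers s > t > T̄ with s − t > K one has ρ(s,t) ≤ 1. -/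
open Finset Filter MeasureTheory ProbabilityTheory

/-- Tail sums of the covariance function. -/
noncomputable def gtail (r : ℤ → ℝ) (a : ℕ) : ℝ := ∑' d : ℕ, r ((d + a : ℕ) : ℤ)

lemma gtail_sub (r : ℤ → ℝ) (hs : Summable fun k : ℕ => r (k : ℤ)) {a b : ℕ} (hab : a ≤ b) :
    gtail r a = (∑ k ∈ Finset.Ico a b, r (k : ℤ)) + gtail r b := by
  have hf : Summable fun d : ℕ => r ((d + a : ℕ) : ℤ) := (summable_nat_add_iff a).mpr hs
  have h := Summable.sum_add_tsum_nat_add (f := fun d : ℕ => r ((d + a : ℕ) : ℤ)) (b - a) hf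
  have h2 : (fun i : ℕ => r (((i + (b - a)) + a : ℕ) : ℤ)) = fun i : ℕ => r ((i + b : ℕ) : ℤ) := by
    funext i
    have : i + (b - a) + a = i + b := by omega
    rw [this]
  rw [h2] at h
  have h3 : ∑ i ∈ Finset.range (b - a), r ((i + a : ℕ) : ℤ) = ∑ k ∈ Finset.Ico a b, r (k : ℤ) := by
    rw [Finset.sum_Ico_eq_sum_range]
    exact Finset.sum_congr rfl fun i _ => by rw [add_comm]
  unfold gtail
  rw [← h, h3]

lemma inner_sum_eq (r : ℤ → ℝ) {i t : ℕ} (hti : t < i) :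
    ∑ j ∈ Finset.Icc 1 t, r ((i : ℤ) - (j : ℤ)) = ∑ k ∈ Finset.Ico (i - t) i, r (k : ℤ) := by
  apply Finset.sum_nbij' (i := fun j => i - j) (j := fun k => i - k)
  · intro a ha; simp only [Finset.mem_Icc] at ha; simp only [Finset.mem_Ico]; omega
  · intro a ha; simp only [Finset.mem_Ico] at ha; simp only [Finset.mem_Icc]; omega
  · intro a ha; simp only [Finset.mem_Icc] at ha; omega
  · intro a ha; simp only [Finset.mem_Ico] at ha; omega
  · intro a ha
    simp only [Finset.mem_Icc] at ha
    congr 1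
    have hai : a ≤ i := by omega
    exact (Int.ofNat_sub hai).symm ▸ rfl

theorem rho_le_one
    (r : ℤ → ℝ) (hEven : ∀ t : ℤ, r (-t) = r t)
    (hAbsSum : Summable fun t : ℤ => |r t|)
    (hSumZero : ∑' t : ℤ, r t = 0)
    (T0 : ℕ) (hT0 : 2 ≤ T0)
    (J1 J2 χ : ℝ) (hJ12 : J1 ≤ J2) (hJ2 : J2 < 0)
    (hχ : χ ∈ Set.Ioo (-2 : ℝ) (-1))
    (hbound : ∀ t : ℤ, (T0 : ℤ) ≤ t →
      J1 * (t : ℝ) ^ χ ≤ r t ∧ r t ≤ J2 * (t : ℝ) ^ χ)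
    (H : ℝ) (hH : H = χ / 2 + 1)
    (hVpos : ∀ t : ℕ, 1 ≤ t → 0 < V r t) :
    ∃ (Tbar : ℕ) (K : ℝ), 1 < K ∧
      ∀ s t : ℕ, Tbar < t → t < s → K < (s : ℝ) - (t : ℝ) →
        Cst r s t / V r t + 1 ≤ 1 := by
  obtain ⟨hχ1, hχ2⟩ := hχ
  -- summability over ℕ
  have hsAbs : Summable fun k : ℕ => |r (k : ℤ)| := by
    have hinj : Function.Injective (fun k : ℕ => (k : ℤ)) := fun a b h => by
      simpa using h
    exact hAbsSum.comp_injective hinj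
  have hs : Summable fun k : ℕ => r (k : ℤ) := hsAbs.of_abs
  set g : ℕ → ℝ := gtail r with hgdef
  -- covariance negative beyond T0
  have hrle : ∀ k : ℕ, T0 ≤ k → r (k : ℤ) ≤ J2 * (k : ℝ) ^ χ := fun k hk =>
    (hbound (k : ℤ) (by exact_mod_cast hk)).2
  have hrneg : ∀ k : ℕ, T0 ≤ k → r (k : ℤ) ≤ 0 := by
    intro k hk
    have hkpos : (0 : ℝ) < (k : ℝ) := by
      have : 0 < k := by omega
      exact_mod_cast this
    have h1 : (0 : ℝ) < (k : ℝ) ^ χ := Real.rpow_pos_of_pos hkpos χ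
    have := hrle k hk
    nlinarith
  -- tails nonpositive beyond T0
  have hgnonpos : ∀ a : ℕ, T0 ≤ a → g a ≤ 0 := by
    intro a ha
    exact tsum_nonpos fun d => hrneg (d + a) (by omega)
  -- tails monotone beyond T0
  have hgmono : ∀ a b : ℕ, T0 ≤ a → a ≤ b → g a ≤ g b := by
    intro a b ha hab
    rw [hgdef, gtail_sub r hs hab]
    have : ∑ k ∈ Finset.Ico a b, r (k : ℤ) ≤ 0 :=
      Finset.sum_nonpos fun k hk => hrneg k (by simp only [Finset.mem_Ico] at hk; omega)
    simp only [← hgdef]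
    linarith
  -- quantitative negativity of tails
  set c : ℝ := -J2 * 2 ^ χ with hcdef
  have hcpos : 0 < c := by
    have : (0:ℝ) < 2 ^ χ := Real.rpow_pos_of_pos (by norm_num) χ
    have : 0 < -J2 := by linarith
    positivity
  have hgquant : ∀ a : ℕ, T0 ≤ a → g a ≤ -(c * (a : ℝ) ^ (χ + 1)) := by
    intro a ha
    have hapos : (0 : ℝ) < (a : ℝ) := by
      have : 0 < a := by omega
      exact_mod_cast this
    have h1 : g a = (∑ k ∈ Finset.Ico a (2 * a + 1), r (k : ℤ)) + g (2 * a + 1) :=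
      gtail_sub r hs (by omega)
    have h2 : g (2 * a + 1) ≤ 0 := hgnonpos _ (by omega)
    have h3 : ∀ k ∈ Finset.Ico a (2 * a + 1), r (k : ℤ) ≤ J2 * (2 * (a : ℝ)) ^ χ := by
      intro k hk
      simp only [Finset.mem_Ico] at hk
      have hkpos : (0 : ℝ) < (k : ℝ) := by
        have : 0 < k := by omega
        exact_mod_cast this
      have hk2a : (k : ℝ) ≤ 2 * (a : ℝ) := by
        have : k ≤ 2 * a := by omega
        exact_mod_cast this
      have hrp : (2 * (a:ℝ)) ^ χ ≤ (k : ℝ) ^ χ :=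
        Real.rpow_le_rpow_of_nonpos hkpos hk2a (by linarith)
      have := hrle k (by omega)
      nlinarith
    have h4 : ∑ k ∈ Finset.Ico a (2 * a + 1), r (k : ℤ)
        ≤ ((a : ℝ) + 1) * (J2 * (2 * (a : ℝ)) ^ χ) := by
      have hcard : (Finset.Ico a (2 * a + 1)).card = a + 1 := by
        rw [Nat.card_Ico]; omega
      calc ∑ k ∈ Finset.Ico a (2 * a + 1), r (k : ℤ)
          ≤ ∑ _k ∈ Finset.Ico a (2 * a + 1), J2 * (2 * (a : ℝ)) ^ χ :=
            Finset.sum_le_sum h3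
        _ = ((a : ℝ) + 1) * (J2 * (2 * (a : ℝ)) ^ χ) := by
            rw [Finset.sum_const, hcard]
            push_cast
            ring
    have hXneg : J2 * (2 * (a : ℝ)) ^ χ ≤ 0 := by
      have : (0:ℝ) < (2 * (a : ℝ)) ^ χ := Real.rpow_pos_of_pos (by linarith) χ
      nlinarith
    have h5 : ((a : ℝ) + 1) * (J2 * (2 * (a : ℝ)) ^ χ) ≤ (a : ℝ) * (J2 * (2 * (a : ℝ)) ^ χ) := by
      nlinarith
    have h6 : (a : ℝ) * (J2 * (2 * (a : ℝ)) ^ χ) = -(c * (a : ℝ) ^ (χ + 1)) := by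
      rw [Real.mul_rpow (by norm_num) (le_of_lt hapos),
        Real.rpow_add_one (ne_of_gt hapos)]
      rw [hcdef]
      ring
    linarith
  -- divergence of the partial sums of c * a^(χ+1)
  have hhnn : ∀ i : ℕ, 0 ≤ c * (i : ℝ) ^ (χ + 1) := fun i => by
    have := Real.rpow_nonneg (Nat.cast_nonneg i) (χ + 1)
    positivity
  have hnotsum : ¬ Summable (fun i : ℕ => c * (i : ℝ) ^ (χ + 1)) := by
    intro hsum
    have h1 : Summable (fun i : ℕ => (i : ℝ) ^ (χ + 1)) := by
      have h2 := hsum.mul_left c⁻¹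
      have h3 : (fun i : ℕ => c⁻¹ * (c * (i : ℝ) ^ (χ + 1))) = fun i : ℕ => (i : ℝ) ^ (χ + 1) := by
        funext i
        field_simp
      rwa [h3] at h2
    have := Real.summable_nat_rpow.mp h1
    linarith
  have hdiv : Tendsto (fun n => ∑ i ∈ Finset.range n, c * (i : ℝ) ^ (χ + 1)) atTop atTop :=
    (not_summable_iff_tendsto_nat_atTop_of_nonneg hhnn).mp hnotsum
  set P : ℕ → ℝ := fun n => ∑ i ∈ Finset.range n, c * (i : ℝ) ^ (χ + 1) with hPdef
  set A : ℝ := ∑ k ∈ Finset.range (T0 - 1), g (1 + k) with hAdef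
  -- choose Tbar
  obtain ⟨M, hM1, hM2⟩ :=
    ((hdiv.eventually_ge_atTop (A + P T0 + 1)).and (eventually_ge_atTop (T0 + 1))).exists
  set Tbar : ℕ := M - 1 with hTbdef
  have hTbT0 : T0 ≤ Tbar := by omega
  have hTb1 : Tbar + 1 = M := by omega
  -- key: partial sums of g up to Tbar are ≤ -1
  have hkey : ∑ k ∈ Finset.range Tbar, g (1 + k) ≤ -1 := by
    have he : T0 - 1 + (Tbar - (T0 - 1)) = Tbar := by omega
    have hsplit : ∑ k ∈ Finset.range Tbar, g (1 + k)
        = A + ∑ k ∈ Finset.range (Tbar - (T0 - 1)), g (1 + (T0 - 1 + k)) := by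
      rw [hAdef, ← Finset.sum_range_add, he]
    have hterm : ∀ k ∈ Finset.range (Tbar - (T0 - 1)),
        g (1 + (T0 - 1 + k)) ≤ -(c * ((T0 + k : ℕ) : ℝ) ^ (χ + 1)) := by
      intro k _
      have e : 1 + (T0 - 1 + k) = T0 + k := by omega
      rw [e]
      exact hgquant _ (by omega)
    have hsum2 : ∑ k ∈ Finset.range (Tbar - (T0 - 1)), c * ((T0 + k : ℕ) : ℝ) ^ (χ + 1)
        = P (Tbar + 1) - P T0 := by
      have h7 := Finset.sum_range_add (fun i : ℕ => c * (i : ℝ) ^ (χ + 1)) T0 (Tbar - (T0 - 1))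
      have he2 : T0 + (Tbar - (T0 - 1)) = Tbar + 1 := by omega
      rw [he2] at h7
      rw [hPdef]
      simp only at h7 ⊢
      rw [h7]
      ring
    have hub : ∑ k ∈ Finset.range (Tbar - (T0 - 1)), g (1 + (T0 - 1 + k))
        ≤ -(P (Tbar + 1) - P T0) := by
      calc ∑ k ∈ Finset.range (Tbar - (T0 - 1)), g (1 + (T0 - 1 + k))
          ≤ ∑ k ∈ Finset.range (Tbar - (T0 - 1)), -(c * ((T0 + k : ℕ) : ℝ) ^ (χ + 1)) :=
            Finset.sum_le_sum hterm
        _ = -(P (Tbar + 1) - P T0) := by rw [← hsum2, Finset.sum_neg_distrib]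
    have hPM : A + P T0 + 1 ≤ P (Tbar + 1) := by rw [hTb1]; exact hM1
    rw [hsplit]
    linarith
  -- tails tend to zero
  have hliml : Tendsto g atTop (nhds 0) := tendsto_sum_nat_add (fun k : ℕ => r (k : ℤ))
  have hTb1pos : (0 : ℝ) < ((Tbar : ℝ) + 1)⁻¹ := by positivity
  obtain ⟨N, hN⟩ := Metric.tendsto_atTop.mp hliml (((Tbar : ℝ) + 1)⁻¹) hTb1pos
  refine ⟨Tbar, (N : ℝ) + 2, by have : (0:ℝ) ≤ (N:ℝ) := Nat.cast_nonneg N; linarith, ?_⟩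
  intro s t ht hts hK
  set n : ℕ := s - t with hndef
  have hns : t + n = s := by omega
  have hnR : ((n : ℕ) : ℝ) = (s : ℝ) - (t : ℝ) := by
    rw [hndef, Nat.cast_sub hts.le]
  have hNn : N + 2 < n := by
    have : ((N : ℝ) + 2) < ((n : ℕ) : ℝ) := by rw [hnR]; exact hK
    exact_mod_cast this
  have ht1 : 1 ≤ t := by omega
  -- the key identity
  have hid1 : Cst r s t = ∑ i ∈ Finset.Icc (t + 1) s, (g (i - t) - g i) := by
    unfold Cst
    apply Finset.sum_congr rfl
    intro i hi
    simp only [Finset.mem_Icc] at hi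
    have hti : t < i := by omega
    rw [inner_sum_eq r hti]
    have := gtail_sub r hs (show i - t ≤ i by omega)
    rw [hgdef]
    linarith
  have hid2 : ∑ i ∈ Finset.Icc (t + 1) s, (g (i - t) - g i)
      = ∑ k ∈ Finset.range n, (g (1 + k) - g (t + 1 + k)) := by
    rw [← Finset.Ico_add_one_right_eq_Icc, Finset.sum_Ico_eq_sum_range]
    have he : s + 1 - (t + 1) = n := by omega
    rw [he]
    apply Finset.sum_congr rfl
    intro k _
    have e1 : t + 1 + k - t = 1 + k := by omega
    rw [e1]
  have hid3 : ∑ k ∈ Finset.range n, (g (1 + k) - g (t + 1 + k))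
      = ∑ k ∈ Finset.range t, (g (1 + k) - g (n + 1 + k)) := by
    rw [Finset.sum_sub_distrib, Finset.sum_sub_distrib]
    have h1 := Finset.sum_range_add (fun k => g (1 + k)) n t
    have h2 := Finset.sum_range_add (fun k => g (1 + k)) t n
    have e1 : ∀ x : ℕ, g (1 + (n + x)) = g (n + 1 + x) := fun x => by
      congr 1; omega
    have e2 : ∀ x : ℕ, g (1 + (t + x)) = g (t + 1 + x) := fun x => by
      congr 1; omega
    simp only [e1] at h1
    simp only [e2] at h2
    have e3 : n + t = t + n := by omega
    rw [e3] at h1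
    linarith
  -- estimate
  have hsplitE : ∑ k ∈ Finset.range t, (g (1 + k) - g (n + 1 + k))
      = ∑ k ∈ Finset.range Tbar, (g (1 + k) - g (n + 1 + k))
        + ∑ k ∈ Finset.range (t - Tbar), (g (1 + (Tbar + k)) - g (n + 1 + (Tbar + k))) := by
    have he : Tbar + (t - Tbar) = t := by omega
    rw [← Finset.sum_range_add, he]
  have hsecond : ∑ k ∈ Finset.range (t - Tbar),
      (g (1 + (Tbar + k)) - g (n + 1 + (Tbar + k))) ≤ 0 := by
    apply Finset.sum_nonpos
    intro k _
    have := hgmono (1 + (Tbar + k)) (n + 1 + (Tbar + k)) (by omega) (by omega)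
    linarith
  have hfirst : ∑ k ∈ Finset.range Tbar, (g (1 + k) - g (n + 1 + k)) ≤ 0 := by
    rw [Finset.sum_sub_distrib]
    have hbnd : ∀ k ∈ Finset.range Tbar, -(((Tbar : ℝ) + 1)⁻¹) ≤ g (n + 1 + k) := by
      intro k _
      have := hN (n + 1 + k) (by omega)
      rw [Real.dist_eq, sub_zero] at this
      have := abs_lt.mp this
      linarith [this.1]
    have h8 : ∑ k ∈ Finset.range Tbar, g (n + 1 + k)
        ≥ ∑ _k ∈ Finset.range Tbar, -(((Tbar : ℝ) + 1)⁻¹) :=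
      Finset.sum_le_sum hbnd
    have h9 : ∑ _k ∈ Finset.range Tbar, -(((Tbar : ℝ) + 1)⁻¹)
        = -((Tbar : ℝ) * ((Tbar : ℝ) + 1)⁻¹) := by
      rw [Finset.sum_const, Finset.card_range]
      push_cast
      ring
    have h10 : (Tbar : ℝ) * ((Tbar : ℝ) + 1)⁻¹ ≤ 1 := by
      rw [← div_eq_mul_inv, div_le_one (by positivity)]
      linarith
    linarith [hkey]
  have hCst : Cst r s t ≤ 0 := by
    rw [hid1, hid2, hid3, hsplitE]
    linarith
  have hV := hVpos t ht1
  have hdivle : Cst r s t / V r t ≤ 0 := div_nonpos_of_nonpos_of_nonneg hCst hV.le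
  linarith
end

section
/- There exist a natural number T̄ and a constant ε > 0 such that for every natural number T and all integers s, t satisfying T̄ < t, t < T/2 and (2/3)·T < s, one has ρ(s,t) ≤ 1 − ε. -/
/-!
Put `centralSum r i = r 0 + 2 ∑_{k=1}^i r k`, which for even `r` is `∑_{|k| ≤ i} r k`, so that
`V r t = ∑_{i<t} centralSum r i`. Since `∑ r = 0`, `centralSum r i = -2 ∑_{k>i} r k`, and the
lower bound `r k ≥ J1 k^χ` gives `centralSum r i = O(i^(χ+1))`; summing, `V r t = O(t^(χ+2))`.
In `Cst r s t = ∑_{t<i≤s} ∑_{1≤j≤t} r (i-j)` every term with `i - j ≥ T0` is negative, the rows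
`i ≤ t + T0` contribute at most `T0 ∑ |r|`, and the `≍ t²` terms with `t + T0 < i ≤ 4t/3` are
each at most `J2 (2t)^χ`. Hence `Cst r s t ≤ -c t^(χ+2)` for large `t`, and
`ρ - 1 = Cst / V ≤ -c / B`.
-/

open Finset MeasureTheory ProbabilityTheory

open Filter

theorem sum_range_rpow_le_integral {x₀ p : ℝ} (hx₀ : 0 < x₀) (hp : p ≤ 0) (hp1 : p ≠ -1)
    (n : ℕ) :
    ∑ k ∈ range n, (x₀ + (k + 1 : ℕ)) ^ p ≤ ((x₀ + n) ^ (p + 1) - x₀ ^ (p + 1)) / (p + 1) := by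
  have hanti : AntitoneOn (fun x : ℝ => x ^ p) (Set.Icc x₀ (x₀ + n)) :=
    (Real.antitoneOn_rpow_Ioi_of_exponent_nonpos hp).mono fun x hx => hx₀.trans_le hx.1
  refine hanti.sum_le_integral.trans_eq (integral_rpow (Or.inr ⟨hp1, fun h0 => ?_⟩))
  rw [Set.mem_uIcc] at h0
  rcases h0 with h0 | h0 <;> linarith [(n.cast_nonneg : (0 : ℝ) ≤ n)]

theorem sum_range_rpow_le_of_lt_neg_one {x₀ p : ℝ} (hx₀ : 0 < x₀) (hp : p < -1) (n : ℕ) :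
    ∑ k ∈ range n, (x₀ + (k + 1 : ℕ)) ^ p ≤ x₀ ^ (p + 1) / -(p + 1) := by
  refine (sum_range_rpow_le_integral hx₀ (by linarith) hp.ne n).trans ?_
  rw [← neg_div_neg_eq, neg_sub]
  gcongr
  · linarith
  · exact sub_le_self _ (Real.rpow_nonneg (by positivity) _)

theorem sum_range_rpow_le_of_neg_one_lt {x₀ p : ℝ} (hx₀ : 0 < x₀) (hp1 : -1 < p) (hp : p ≤ 0)
    (n : ℕ) : ∑ k ∈ range n, (x₀ + (k + 1 : ℕ)) ^ p ≤ (x₀ + n) ^ (p + 1) / (p + 1) := by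
  refine (sum_range_rpow_le_integral hx₀ hp hp1.ne' n).trans ?_
  gcongr
  · linarith
  · exact sub_le_self _ (Real.rpow_nonneg hx₀.le _)

theorem eventually_le_natCast_rpow {q : ℝ} (hq : 0 < q) (a : ℝ) :
    ∀ᶠ t : ℕ in atTop, a ≤ (t : ℝ) ^ q :=
  ((tendsto_rpow_atTop hq).comp tendsto_natCast_atTop_atTop).eventually_ge_atTop a

theorem div_le_neg_div_of_le {C V x a b : ℝ} (hV : 0 < V) (ha : 0 ≤ a) (hb : 0 < b)
    (hC : C ≤ -(a * x)) (hVx : V ≤ b * x) : C / V ≤ -(a / b) := by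
  rw [div_le_iff₀ hV]
  have : a / b * V ≤ a * x := by
    calc a / b * V ≤ a / b * (b * x) := by gcongr
      _ = a * x := by field_simp
  linarith

section Covariance

noncomputable def centralSum (r : ℤ → ℝ) (i : ℕ) : ℝ :=
  r 0 + 2 * ∑ k ∈ range i, r (k + 1 : ℕ)

theorem V_succ_s7 (r : ℤ → ℝ) (t : ℕ) : V r (t + 1) = V r t + centralSum r t := by
  rcases Nat.eq_zero_or_pos t with rfl | ht
  · simp [V, centralSum]
  have hreflect :
      ∑ j ∈ Icc 1 (t + 1 - 1), r ((t + 1 : ℕ) - (j : ℤ)) = ∑ k ∈ range t, r (k + 1 : ℕ) := by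
    refine sum_nbij' (fun j => t - j) (fun k => t - k) ?_ ?_ ?_ ?_ ?_ <;>
      intro j hj <;> simp only [mem_Icc, mem_range] at hj ⊢
    all_goals try omega
    congr 1
    push_cast [Nat.cast_sub (by omega : j ≤ t)]
    ring
  rw [V, V, sum_Icc_succ_top (by omega), hreflect, centralSum]
  push_cast
  ring

theorem V_eq_sum_centralSum (r : ℤ → ℝ) (t : ℕ) : V r t = ∑ i ∈ range t, centralSum r i := by
  induction t with
  | zero => simp [V]
  | succ t ih => rw [V_succ_s7, ih, sum_range_succ]

variable {r : ℤ → ℝ} {T0 : ℕ} {J1 J2 χ : ℝ}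

theorem hasSum_nat_add_centralSum (hEven : ∀ k, r (-k) = r k) (hr : HasSum r 0)
    (i : ℕ) : HasSum (fun n : ℕ => r (n + (i + 1) : ℕ)) (-centralSum r i / 2) := by
  have hnat : HasSum (fun n : ℕ => r n) (r 0 / 2) := by
    have := hr.nat_add_neg
    simp only [hEven, zero_add] at this
    simpa [← two_mul, mul_div_cancel_left₀] using this.div_const 2
  convert (hasSum_nat_add_iff' (i + 1)).2 hnat using 1
  · rfl
  · rw [centralSum, sum_range_succ']
    push_cast
    ring

theorem centralSum_le (hEven : ∀ k, r (-k) = r k)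
    (hr : HasSum r 0) (hJ1 : J1 ≤ 0) (hχ : χ < -1)
    (hlow : ∀ k : ℤ, (T0 : ℤ) ≤ k → J1 * (k : ℝ) ^ χ ≤ r k) {i : ℕ} (hi : T0 ≤ i) (hi0 : 0 < i) :
    centralSum r i ≤ 2 * J1 / (χ + 1) * (i : ℝ) ^ (χ + 1) := by
  have hpartial : ∀ n, J1 * ((i : ℝ) ^ (χ + 1) / -(χ + 1)) ≤
      ∑ k ∈ range n, r (k + (i + 1) : ℕ) := fun n =>
    calc J1 * ((i : ℝ) ^ (χ + 1) / -(χ + 1))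
        ≤ J1 * ∑ k ∈ range n, ((i : ℝ) + (k + 1 : ℕ)) ^ χ :=
          mul_le_mul_of_nonpos_left
            (sum_range_rpow_le_of_lt_neg_one (by exact_mod_cast hi0) hχ n) hJ1
      _ = ∑ k ∈ range n, J1 * (((k + (i + 1) : ℕ) : ℤ) : ℝ) ^ χ := by
          rw [mul_sum]; push_cast; ring_nf
      _ ≤ ∑ k ∈ range n, r (k + (i + 1) : ℕ) :=
          sum_le_sum fun k _ => hlow _ (by omega)
  have hlim := ge_of_tendsto' (hasSum_nat_add_centralSum hEven hr i).tendsto_sum_nat hpartial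
  have hχ1 : χ + 1 ≠ 0 := by linarith
  have : 2 * J1 / (χ + 1) * (i : ℝ) ^ (χ + 1) = -2 * (J1 * ((i : ℝ) ^ (χ + 1) / -(χ + 1))) := by
    field_simp
  linarith

theorem V_le_add_rpow (hEven : ∀ k, r (-k) = r k)
    (hr : HasSum r 0) (hT0 : 2 ≤ T0) (hJ1 : J1 ≤ 0) (hχ : χ ∈ Set.Ioo (-2 : ℝ) (-1))
    (hlow : ∀ k : ℤ, (T0 : ℤ) ≤ k → J1 * (k : ℝ) ^ χ ≤ r k) {t : ℕ} (ht : T0 ≤ t) :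
    V r t ≤ ∑ i ∈ range T0, centralSum r i + 2 * J1 / (χ + 1) / (χ + 2) * (t : ℝ) ^ (χ + 2) := by
  obtain ⟨hχ2, hχ1⟩ := hχ
  have hc : 0 ≤ 2 * J1 / (χ + 1) := div_nonneg_of_nonpos (by linarith) (by linarith)
  rw [V_eq_sum_centralSum, ← sum_range_add_sum_Ico _ ht, div_mul_eq_mul_div, mul_div_assoc]
  gcongr
  calc ∑ i ∈ Ico T0 t, centralSum r i
      ≤ ∑ i ∈ Ico T0 t, 2 * J1 / (χ + 1) * (i : ℝ) ^ (χ + 1) :=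
        sum_le_sum fun i hi => centralSum_le hEven hr hJ1 hχ1 hlow (mem_Ico.1 hi).1 (by
          have := (mem_Ico.1 hi).1; omega)
    _ = 2 * J1 / (χ + 1) * ∑ k ∈ range (t - T0), ((T0 - 1 : ℝ) + (k + 1 : ℕ)) ^ (χ + 1) := by
        rw [sum_Ico_eq_sum_range, mul_sum]; push_cast; ring_nf
    _ ≤ 2 * J1 / (χ + 1) * (((T0 - 1 : ℝ) + (t - T0 : ℕ)) ^ (χ + 1 + 1) / (χ + 1 + 1)) := by
        gcongr
        exact sum_range_rpow_le_of_neg_one_lt (by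
          have : (2 : ℝ) ≤ T0 := by exact_mod_cast hT0
          linarith) (by linarith) (by linarith) _
    _ ≤ 2 * J1 / (χ + 1) * ((t : ℝ) ^ (χ + 2) / (χ + 2)) := by
        have hbase : (T0 - 1 : ℝ) + (t - T0 : ℕ) = t - 1 := by push_cast [Nat.cast_sub ht]; ring
        have ht1 : (1 : ℝ) ≤ t := by exact_mod_cast (by omega : 1 ≤ t)
        rw [show χ + 1 + 1 = χ + 2 by ring, hbase]
        gcongr <;> linarith

theorem eventually_V_le_rpow (hEven : ∀ k, r (-k) = r k)
    (hr : HasSum r 0) (hT0 : 2 ≤ T0) (hJ1 : J1 ≤ 0) (hχ : χ ∈ Set.Ioo (-2 : ℝ) (-1))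
    (hlow : ∀ k : ℤ, (T0 : ℤ) ≤ k → J1 * (k : ℝ) ^ χ ≤ r k) :
    ∃ B > 0, ∀ᶠ t : ℕ in atTop, V r t ≤ B * (t : ℝ) ^ (χ + 2) := by
  have hc : 0 ≤ 2 * J1 / (χ + 1) / (χ + 2) :=
    div_nonneg (div_nonneg_of_nonpos (by linarith) (by linarith [hχ.2])) (by linarith [hχ.1])
  have hq : 0 < χ + 2 := by linarith [hχ.1]
  refine ⟨1 + 2 * J1 / (χ + 1) / (χ + 2), by linarith, ?_⟩
  filter_upwards [eventually_ge_atTop T0,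
    eventually_le_natCast_rpow hq (∑ i ∈ range T0, centralSum r i)] with t ht hA
  linarith [V_le_add_rpow hEven hr hT0 hJ1 hχ hlow ht]

theorem sum_le_tsum_abs_of_injOn {ι : Type*} (hr : Summable fun k => |r k|)
    (s : Finset ι) {e : ι → ℤ} (he : Set.InjOn e s) : ∑ x ∈ s, r (e x) ≤ ∑' k, |r k| :=
  calc ∑ x ∈ s, r (e x) ≤ ∑ x ∈ s, |r (e x)| := sum_le_sum fun _ _ => le_abs_self _
    _ = ∑ k ∈ s.image e, |r k| := (sum_image (f := fun k => |r k|) he).symm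
    _ ≤ ∑' k, |r k| := hr.sum_le_tsum _ fun _ _ => abs_nonneg _

theorem Cst_le_add_mul (hr : Summable fun k => |r k|) (hJ2 : J2 ≤ 0)
    (hχ : χ ≤ 0) (hup : ∀ k : ℤ, (T0 : ℤ) ≤ k → r k ≤ J2 * (k : ℝ) ^ χ) {s t m : ℕ}
    (hm : T0 ≤ m) (hmt : m ≤ t) (hs : t + m ≤ s) :
    Cst r s t ≤ T0 * ∑' k, |r k| + ((m : ℝ) - T0) * (t * (J2 * (2 * t : ℝ) ^ χ)) := by
  have hnear : ∀ i : ℕ, ∑ j ∈ Icc 1 t, r ((i : ℤ) - (j : ℤ)) ≤ ∑' k, |r k| := fun i =>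
    sum_le_tsum_abs_of_injOn hr _ fun a _ b _ h => by simpa using h
  have hmid : ∀ i ∈ Ioc (t + T0) (t + m),
      ∑ j ∈ Icc 1 t, r ((i : ℤ) - (j : ℤ)) ≤ t * (J2 * (2 * t : ℝ) ^ χ) := by
    intro i hi
    rw [mem_Ioc] at hi
    calc ∑ j ∈ Icc 1 t, r ((i : ℤ) - (j : ℤ)) ≤ ∑ j ∈ Icc 1 t, J2 * (2 * t : ℝ) ^ χ := by
          refine sum_le_sum fun j hj => ?_
          rw [mem_Icc] at hj
          have hpos : (0 : ℝ) < ((i - j : ℤ) : ℝ) := by exact_mod_cast (by omega : (0 : ℤ) < i - j)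
          have hle : ((i - j : ℤ) : ℝ) ≤ 2 * t := by exact_mod_cast (by omega : (i : ℤ) - j ≤ 2 * t)
          exact (hup _ (by omega)).trans
            (mul_le_mul_of_nonpos_left (Real.rpow_le_rpow_of_nonpos hpos hle hχ) hJ2)
      _ = t * (J2 * (2 * t : ℝ) ^ χ) := by simp
  have hfar : ∀ i ∈ Ioc (t + m) s, ∑ j ∈ Icc 1 t, r ((i : ℤ) - (j : ℤ)) ≤ 0 := by
    intro i hi
    refine sum_nonpos fun j hj => ?_
    rw [mem_Ioc] at hi
    rw [mem_Icc] at hj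
    exact (hup _ (by omega)).trans (mul_nonpos_of_nonpos_of_nonneg hJ2
      (Real.rpow_nonneg (by exact_mod_cast (by omega : (0 : ℤ) ≤ i - j)) _))
  rw [Cst, Icc_add_one_left_eq_Ioc, ← sum_Ioc_consecutive _ (by omega : t ≤ t + T0) (by omega),
    ← sum_Ioc_consecutive _ (by omega : t + T0 ≤ t + m) hs]
  have h1 := sum_le_card_nsmul (Ioc t (t + T0)) _ _ fun i _ => hnear i
  have h2 := sum_le_card_nsmul _ _ _ hmid
  have h3 := sum_nonpos hfar
  simp only [Nat.card_Ioc, nsmul_eq_mul, add_tsub_cancel_left, Nat.add_sub_add_left] at h1 h2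
  rw [Nat.cast_sub hm] at h2
  linarith

theorem eventually_Cst_le_neg_rpow (hr : Summable fun k => |r k|) (hJ2 : J2 < 0)
    (hχ2 : -2 < χ) (hχ0 : χ ≤ 0) (hup : ∀ k : ℤ, (T0 : ℤ) ≤ k → r k ≤ J2 * (k : ℝ) ^ χ) :
    ∃ c > 0, ∀ᶠ t : ℕ in atTop, ∀ s : ℕ, 4 * (t : ℝ) / 3 < s →
      Cst r s t ≤ -(c * (t : ℝ) ^ (χ + 2)) := by
  -- `t / 6` rows of `t` terms, each at most `J2 (2t)^χ`; half of that absorbs `T0 ∑ |r|`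
  set c := -J2 * 2 ^ χ / 12
  have hc : 0 < c :=
    div_pos (mul_pos (neg_pos.2 hJ2) (Real.rpow_pos_of_pos two_pos χ)) (by norm_num)
  refine ⟨c, hc, ?_⟩
  filter_upwards [eventually_ge_atTop (6 * (T0 + 1)),
    eventually_le_natCast_rpow (by linarith : 0 < χ + 2) ((T0 * ∑' k, |r k|) / c)]
    with t ht hx s hs
  have htpos : (0 : ℝ) < t := by exact_mod_cast (by omega : 0 < t)
  have hts : 4 * t < 3 * s := by
    have : (4 * t : ℝ) < 3 * s := by linarith
    exact_mod_cast this
  have hC := Cst_le_add_mul hr hJ2.le hχ0 hup (s := s) (t := t) (m := t / 3)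
    (by omega) (by omega) (by omega)
  have hm : (t : ℝ) / 6 ≤ ((t / 3 : ℕ) : ℝ) - T0 := by
    have h3 : (t : ℝ) ≤ 3 * ((t / 3 : ℕ) : ℝ) + 2 := by
      exact_mod_cast (by omega : t ≤ 3 * (t / 3) + 2)
    have h6 : 6 * ((T0 : ℝ) + 1) ≤ t := by exact_mod_cast ht
    linarith
  have hN : (t : ℝ) * (J2 * (2 * t : ℝ) ^ χ) ≤ 0 :=
    mul_nonpos_of_nonneg_of_nonpos htpos.le
      (mul_nonpos_of_nonpos_of_nonneg hJ2.le (Real.rpow_nonneg (by positivity) _))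
  have hlead :
      (t : ℝ) / 6 * (t * (J2 * (2 * t : ℝ) ^ χ)) = -(2 * (c * (t : ℝ) ^ (χ + 2))) := by
    rw [Real.mul_rpow zero_le_two htpos.le, Real.rpow_add htpos, Real.rpow_two]
    ring
  have hx' : T0 * ∑' k, |r k| ≤ c * (t : ℝ) ^ (χ + 2) := (div_le_iff₀' hc).1 hx
  nlinarith [mul_le_mul_of_nonpos_right hm hN]

end Covariance

theorem rho_le_one_sub_eps_general
    (r : ℤ → ℝ) (hEven : ∀ t : ℤ, r (-t) = r t)
    (hAbsSum : Summable fun t : ℤ => |r t|)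
    (hSumZero : ∑' t : ℤ, r t = 0)
    (T0 : ℕ) (hT0 : 2 ≤ T0)
    (J1 J2 χ : ℝ) (hJ12 : J1 ≤ J2) (hJ2 : J2 < 0)
    (hχ : χ ∈ Set.Ioo (-2 : ℝ) (-1))
    (hbound : ∀ t : ℤ, (T0 : ℤ) ≤ t →
      J1 * (t : ℝ) ^ χ ≤ r t ∧ r t ≤ J2 * (t : ℝ) ^ χ)
    (hVpos : ∀ t : ℕ, 1 ≤ t → 0 < V r t) :
    ∃ (Tbar : ℕ) (ε : ℝ), 0 < ε ∧
      ∀ T s t : ℕ, Tbar < t → (t : ℝ) < (T : ℝ) / 2 → (2 / 3 : ℝ) * (T : ℝ) < (s : ℝ) →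
        Cst r s t / V r t + 1 ≤ 1 - ε := by
  have hr : HasSum r 0 := hSumZero ▸ hAbsSum.of_abs.hasSum
  obtain ⟨B, hB, hV⟩ := eventually_V_le_rpow hEven hr hT0 (by linarith) hχ
    fun k hk => (hbound k hk).1
  obtain ⟨c, hc, hC⟩ := eventually_Cst_le_neg_rpow hAbsSum hJ2 hχ.1 (by linarith [hχ.2])
    fun k hk => (hbound k hk).2
  obtain ⟨Tbar, hTbar⟩ := eventually_atTop.1 (hV.and (hC.and (eventually_ge_atTop 1)))
  refine ⟨Tbar, c / B, div_pos hc hB, fun T s t ht htT hs => ?_⟩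
  obtain ⟨hVt, hCt, ht1⟩ := hTbar t ht.le
  have := div_le_neg_div_of_le (hVpos t ht1) hc.le hB (hCt s (by linarith)) hVt
  linarith

theorem rho_le_one_sub_eps
    (r : ℤ → ℝ) (hEven : ∀ t : ℤ, r (-t) = r t)
    (hAbsSum : Summable fun t : ℤ => |r t|)
    (hSumZero : ∑' t : ℤ, r t = 0)
    (T0 : ℕ) (hT0 : 2 ≤ T0)
    (J1 J2 χ : ℝ) (hJ12 : J1 ≤ J2) (hJ2 : J2 < 0)
    (hχ : χ ∈ Set.Ioo (-2 : ℝ) (-1))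
    (hbound : ∀ t : ℤ, (T0 : ℤ) ≤ t →
      J1 * (t : ℝ) ^ χ ≤ r t ∧ r t ≤ J2 * (t : ℝ) ^ χ)
    (H : ℝ) (hH : H = χ / 2 + 1)
    (hVpos : ∀ t : ℕ, 1 ≤ t → 0 < V r t) :
    ∃ (Tbar : ℕ) (ε : ℝ), 0 < ε ∧
      ∀ T s t : ℕ, Tbar < t → (t : ℝ) < (T : ℝ) / 2 → (2 / 3 : ℝ) * (T : ℝ) < (s : ℝ) →
        Cst r s t / V r t + 1 ≤ 1 - ε :=
  rho_le_one_sub_eps_general r hEven hAbsSum hSumZero T0 hT0 J1 J2 χ hJ12 hJ2 hχ hbound hVpos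
end

section
/- Set C7 := J2 / (2H·(2H−1)), which is strictly positive. Then there exists a real constant C6 such that for all integers s > t > T0 one has C(s,t) ≤ C6 + C7·( s^{2H} − (s−t)^{2H} − ( (t+1)^{2H} − 1 ) ). -/
/-!
After the change of indices `i = t + 1 + a`, `j = t - b`, `C(s,t) = ∑_{a < s-t} ∑_{b < t} r(a+b+1)`.
From lag `T0` on, `r(k) ≤ J2 k^χ`; the finitely many smaller lags contribute a bounded excess.
For `G(x) = x^{2H} / (2H (2H-1))` we have `G'' = x^χ`, which is positive and decreasing, so two
applications of the mean value theorem give `0 < G(k+2) - 2G(k+1) + G(k) ≤ k^χ`. Hence the double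
sum of `(a+b+1)^χ` dominates the double telescoping sum of these second differences,
`G(s+1) - G(t+1) - G(s-t+1) + G(1)`, which by convexity of `G` is at least
`G(s) - G(s-t) - G(t+1) + G(1)`. Multiplying by `J2 < 0` gives the estimate.
-/

open Finset MeasureTheory ProbabilityTheory

open fwdDiff

theorem sum_range_fwdDiff_one {M G : Type*} [AddCommMonoidWithOne M] [AddCommGroup G]
    (g : M → G) (x : M) (m : ℕ) :
    ∑ b ∈ range m, Δ_[1] g (x + b) = g (x + m) - g x := by
  simpa [fwdDiff, add_assoc] using Finset.sum_range_sub (fun b => g (x + b)) m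

theorem sum_range_sum_range_fwdDiff_fwdDiff_one {M G : Type*} [AddCommMonoidWithOne M]
    [AddCommGroup G] (F : M → G) (x : M) (n m : ℕ) :
    ∑ a ∈ range n, ∑ b ∈ range m, Δ_[1] (Δ_[1] F) (x + a + b)
      = F (x + m + n) - F (x + m) - (F (x + n) - F x) := by
  calc ∑ a ∈ range n, ∑ b ∈ range m, Δ_[1] (Δ_[1] F) (x + a + b)
      = ∑ a ∈ range n, (Δ_[1] F (x + m + a) - Δ_[1] F (x + a)) := by
        refine sum_congr rfl fun a _ => ?_
        rw [sum_range_fwdDiff_one, add_right_comm]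
    _ = _ := by rw [sum_sub_distrib, sum_range_fwdDiff_one, sum_range_fwdDiff_one]

theorem exists_fwdDiff_fwdDiff_eq {f f' f'' : ℝ → ℝ} {a : ℝ}
    (hf : ∀ x ∈ Set.Icc a (a + 2), HasDerivAt f (f' x) x)
    (hf' : ∀ x ∈ Set.Icc a (a + 2), HasDerivAt f' (f'' x) x) :
    ∃ η ∈ Set.Ioo a (a + 2), Δ_[1] (Δ_[1] f) a = f'' η := by
  have hg : ∀ x ∈ Set.Icc a (a + 1), HasDerivAt (Δ_[1] f) (f' (x + 1) - f' x) x := fun x hx =>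
    ((hf (x + 1) ⟨by linarith [hx.1], by linarith [hx.2]⟩).comp_add_const x 1).sub
      (hf x ⟨hx.1, by linarith [hx.2]⟩)
  obtain ⟨ξ, hξ, hξeq⟩ := exists_hasDerivAt_eq_slope (Δ_[1] f) _ (lt_add_one a)
    (fun x hx => (hg x hx).continuousAt.continuousWithinAt)
    (fun x hx => hg x (Set.Ioo_subset_Icc_self hx))
  have hf'ξ : ∀ x ∈ Set.Icc ξ (ξ + 1), HasDerivAt f' (f'' x) x := fun x hx =>
    hf' x ⟨by linarith [hx.1, hξ.1], by linarith [hx.2, hξ.2]⟩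
  obtain ⟨η, hη, hηeq⟩ := exists_hasDerivAt_eq_slope f' f'' (lt_add_one ξ)
    (fun x hx => (hf'ξ x hx).continuousAt.continuousWithinAt)
    (fun x hx => hf'ξ x (Set.Ioo_subset_Icc_self hx))
  refine ⟨η, ⟨hξ.1.trans hη.1, by linarith [hη.2, hξ.2]⟩, ?_⟩
  rw [hηeq, add_sub_cancel_left, div_one, hξeq, add_sub_cancel_left, div_one]
  rfl

noncomputable def rpowSecondAntideriv (p x : ℝ) : ℝ := x ^ p / (p * (p - 1))

theorem fwdDiff_fwdDiff_rpowSecondAntideriv_mem_Ioc {p x : ℝ} (hp0 : p ≠ 0) (hp1 : p ≠ 1)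
    (hp2 : p ≤ 2) (hx : 0 < x) :
    Δ_[1] (Δ_[1] (rpowSecondAntideriv p)) x ∈ Set.Ioc 0 (x ^ (p - 2)) := by
  have hp1' : p - 1 ≠ 0 := sub_ne_zero.mpr hp1
  obtain ⟨η, hη, hηeq⟩ := exists_fwdDiff_fwdDiff_eq (f := rpowSecondAntideriv p)
    (f' := fun y => y ^ (p - 1) / (p - 1)) (f'' := fun y => y ^ (p - 2)) (a := x)
    (fun y hy => by
      have hy0 : y ≠ 0 := (hx.trans_le hy.1).ne'
      have h := (Real.hasDerivAt_rpow_const (p := p) (Or.inl hy0)).div_const (p * (p - 1))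
      rwa [show p * y ^ (p - 1) / (p * (p - 1)) = y ^ (p - 1) / (p - 1) by field_simp] at h)
    (fun y hy => by
      have hy0 : y ≠ 0 := (hx.trans_le hy.1).ne'
      have h := (Real.hasDerivAt_rpow_const (p := p - 1) (Or.inl hy0)).div_const (p - 1)
      rwa [mul_div_cancel_left₀ _ hp1', sub_sub, one_add_one_eq_two] at h)
  rw [hηeq]
  exact ⟨Real.rpow_pos_of_pos (hx.trans hη.1) _,
    Real.rpow_le_rpow_of_nonpos hx hη.1.le (by linarith)⟩

theorem Cst_add_eq_sum_range (r : ℤ → ℝ) (t n : ℕ) :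
    Cst r (t + n) t = ∑ a ∈ range n, ∑ b ∈ range t, r (a + b + 1 : ℕ) := by
  refine sum_nbij' (fun i => i - (t + 1)) (fun a => a + t + 1) ?_ ?_ ?_ ?_ fun i hi => ?_
  iterate 4 (intro a ha; simp only [mem_Icc, mem_range] at ha ⊢; omega)
  simp only [mem_Icc] at hi
  refine sum_nbij' (fun j => t - j) (fun b => t - b) ?_ ?_ ?_ ?_ fun j hj => ?_
  iterate 4 (intro a ha; simp only [mem_Icc, mem_range] at ha ⊢; omega)
  simp only [mem_Icc] at hj
  congr 1
  omega

theorem sum_range_le_sum_range_of_eq_zero {f : ℕ → ℝ} {T : ℕ} (hf0 : ∀ k, 0 ≤ f k)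
    (hfT : ∀ k, T ≤ k → f k = 0) (n : ℕ) :
    ∑ k ∈ range n, f k ≤ ∑ k ∈ range T, f k :=
  calc ∑ k ∈ range n, f k ≤ ∑ k ∈ range (max n T), f k :=
        sum_le_sum_of_subset_of_nonneg (range_mono (le_max_left _ _)) fun k _ _ => hf0 k
    _ = ∑ k ∈ range T, f k :=
        (sum_subset (range_mono (le_max_right _ _)) fun k _ hk => hfT k (by simpa using hk)).symm

theorem sum_range_sum_range_le_of_eq_zero {f : ℕ → ℝ} {T : ℕ} (hf0 : ∀ k, 0 ≤ f k)
    (hfT : ∀ k, T ≤ k → f k = 0) (n m : ℕ) :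
    ∑ a ∈ range n, ∑ b ∈ range m, f (a + b + 1)
      ≤ ∑ a ∈ range T, ∑ b ∈ range T, f (a + b + 1) :=
  calc ∑ a ∈ range n, ∑ b ∈ range m, f (a + b + 1)
      ≤ ∑ a ∈ range n, ∑ b ∈ range T, f (a + b + 1) :=
        sum_le_sum fun a _ => sum_range_le_sum_range_of_eq_zero (fun _ => hf0 _)
          (fun b hb => hfT _ (by omega)) m
    _ ≤ ∑ a ∈ range T, ∑ b ∈ range T, f (a + b + 1) :=
        sum_range_le_sum_range_of_eq_zero (fun _ => sum_nonneg fun _ _ => hf0 _)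
          (fun a ha => sum_eq_zero fun b _ => hfT _ (by omega)) n

theorem rpowSecondAntideriv_sub_le_sum_sum_rpow {p : ℝ} (hp0 : p ≠ 0) (hp1 : p ≠ 1)
    (hp2 : p ≤ 2) {n : ℕ} (hn : 0 < n) (m : ℕ) :
    rpowSecondAntideriv p (m + n) - rpowSecondAntideriv p n
        - (rpowSecondAntideriv p (m + 1) - rpowSecondAntideriv p 1)
      ≤ ∑ a ∈ range n, ∑ b ∈ range m, ((a + b + 1 : ℕ) : ℝ) ^ (p - 2) := by
  set G := rpowSecondAntideriv p
  have hΔΔ (x : ℝ) (hx : 0 < x) := fwdDiff_fwdDiff_rpowSecondAntideriv_mem_Ioc hp0 hp1 hp2 hx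
  have hΔ_mono : Δ_[1] G n ≤ Δ_[1] G (n + m) := by
    rw [← sub_nonneg, ← sum_range_fwdDiff_one]
    exact sum_nonneg fun b _ => (hΔΔ _ (by positivity)).1.le
  calc G (m + n) - G n - (G (m + 1) - G 1)
      ≤ G (1 + m + n) - G (1 + m) - (G (1 + n) - G 1) := by
        rw [show (1 : ℝ) + m + n = n + m + 1 by ring, add_comm (1 : ℝ) m, add_comm (1 : ℝ) n,
          add_comm (m : ℝ) n]
        simp only [fwdDiff] at hΔ_mono
        linarith
    _ = ∑ a ∈ range n, ∑ b ∈ range m, Δ_[1] (Δ_[1] G) (1 + a + b) :=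
        (sum_range_sum_range_fwdDiff_fwdDiff_one G 1 n m).symm
    _ ≤ ∑ a ∈ range n, ∑ b ∈ range m, ((a + b + 1 : ℕ) : ℝ) ^ (p - 2) :=
        sum_le_sum fun a _ => sum_le_sum fun b _ => by
          refine ((hΔΔ _ (by positivity)).2).trans_eq ?_
          congr 1
          push_cast
          ring

theorem covariance_key_estimate_general
    (r : ℤ → ℝ) (T0 : ℕ) (J1 J2 χ : ℝ) (hJ2 : J2 < 0)
    (hχ : χ ∈ Set.Ioo (-2 : ℝ) (-1))
    (hbound : ∀ t : ℤ, (T0 : ℤ) ≤ t →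
      J1 * (t : ℝ) ^ χ ≤ r t ∧ r t ≤ J2 * (t : ℝ) ^ χ)
    (H : ℝ) (hH : H = χ / 2 + 1) :
    0 < J2 / (2 * H * (2 * H - 1)) ∧
    ∃ C6 : ℝ, ∀ s t : ℕ, T0 < t → t < s →
      Cst r s t ≤ C6 + (J2 / (2 * H * (2 * H - 1))) *
        ((s : ℝ) ^ (2 * H) - ((s : ℝ) - (t : ℝ)) ^ (2 * H)
          - (((t : ℝ) + 1) ^ (2 * H) - 1)) := by
  obtain ⟨hχ2, hχ1⟩ := hχ
  have hχH : χ = 2 * H - 2 := by rw [hH]; ring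
  have hden : 2 * H * (2 * H - 1) < 0 := by rw [hH]; nlinarith
  set e : ℕ → ℝ := fun k => max (r k - J2 * (k : ℝ) ^ χ) 0
  have heT (k : ℕ) (hk : T0 ≤ k) : e k = 0 :=
    max_eq_right (sub_nonpos.2 (by exact_mod_cast (hbound k (by exact_mod_cast hk)).2))
  refine ⟨div_pos_of_neg_of_neg hJ2 hden, ∑ a ∈ range T0, ∑ b ∈ range T0, e (a + b + 1), ?_⟩
  intro s t _ hts
  obtain ⟨n, rfl⟩ := Nat.exists_eq_add_of_le hts.le
  calc Cst r (t + n) t = ∑ a ∈ range n, ∑ b ∈ range t, r (a + b + 1 : ℕ) :=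
        Cst_add_eq_sum_range r t n
    _ ≤ ∑ a ∈ range n, ∑ b ∈ range t, (e (a + b + 1) + J2 * ((a + b + 1 : ℕ) : ℝ) ^ χ) :=
        sum_le_sum fun a _ => sum_le_sum fun b _ => by
          linarith [le_max_left (r (a + b + 1 : ℕ) - J2 * ((a + b + 1 : ℕ) : ℝ) ^ χ) 0]
    _ = ∑ a ∈ range n, ∑ b ∈ range t, e (a + b + 1)
          + J2 * ∑ a ∈ range n, ∑ b ∈ range t, ((a + b + 1 : ℕ) : ℝ) ^ χ := by
        simp only [sum_add_distrib, mul_sum]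
    _ ≤ ∑ a ∈ range T0, ∑ b ∈ range T0, e (a + b + 1)
          + J2 * (rpowSecondAntideriv (2 * H) (t + n) - rpowSecondAntideriv (2 * H) n
            - (rpowSecondAntideriv (2 * H) (t + 1) - rpowSecondAntideriv (2 * H) 1)) := by
        refine add_le_add (sum_range_sum_range_le_of_eq_zero (fun _ => le_max_right _ _) heT n t)
          (mul_le_mul_of_nonpos_left ?_ hJ2.le)
        rw [hχH]
        exact rpowSecondAntideriv_sub_le_sum_sum_rpow (by linarith) (by linarith) (by linarith)
          (by omega) t
    _ = _ := by
        simp only [rpowSecondAntideriv, Nat.cast_add, add_sub_cancel_left, Real.one_rpow]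
        ring

theorem covariance_key_estimate
    (r : ℤ → ℝ) (hEven : ∀ t : ℤ, r (-t) = r t)
    (hAbsSum : Summable fun t : ℤ => |r t|)
    (hSumZero : ∑' t : ℤ, r t = 0)
    (T0 : ℕ) (hT0 : 2 ≤ T0)
    (J1 J2 χ : ℝ) (hJ12 : J1 ≤ J2) (hJ2 : J2 < 0)
    (hχ : χ ∈ Set.Ioo (-2 : ℝ) (-1))
    (hbound : ∀ t : ℤ, (T0 : ℤ) ≤ t →
      J1 * (t : ℝ) ^ χ ≤ r t ∧ r t ≤ J2 * (t : ℝ) ^ χ)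
    (H : ℝ) (hH : H = χ / 2 + 1) :
    0 < J2 / (2 * H * (2 * H - 1)) ∧
    ∃ C6 : ℝ, ∀ s t : ℕ, T0 < t → t < s →
      Cst r s t ≤ C6 + (J2 / (2 * H * (2 * H - 1))) *
        ((s : ℝ) ^ (2 * H) - ((s : ℝ) - (t : ℝ)) ^ (2 * H)
          - (((t : ℝ) + 1) ^ (2 * H) - 1)) :=
  covariance_key_estimate_general r T0 J1 J2 χ hJ2 hχ hbound H hH
end

section
/- Let X and Y be real random variables on a probability space (Ω, F, P) such that the law of the pair (X, Y) on ℝ² is a centered Gaussian measure and Var(X) > 0, and let q > 0. Then E[ Y · sgn(X) · |X|^q ] = ( Cov(X, Y) / Var(X) ) · E[ |X|^{q+1} ]. -/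
/-!
Regress `Y` on `X`: with `ρ = cov[X, Y] / Var[X]`, the residual `W = Y - ρ X` is uncorrelated
with `X`, and `(X, W)` is a linear image of the Gaussian pair `(X, Y)`, hence Gaussian; so `W` is
independent of `X`. Therefore `E[Y g(X)] = ρ E[X g(X)] + E[W] E[g(X)]` for any `g`, and for
`g x = sgn x * |x| ^ q` we have `x g(x) = |x| ^ (q + 1)` while `E[W] = 0`.
-/

open Finset MeasureTheory ProbabilityTheory

open scoped NNReal

lemma Real.mul_sign_mul_abs_rpow (x : ℝ) {q : ℝ} (hq : q + 1 ≠ 0) :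
    x * (Real.sign x * |x| ^ q) = |x| ^ (q + 1) := by
  rw [Real.rpow_add_one' (abs_nonneg x) hq]
  rcases lt_trichotomy x 0 with hx | rfl | hx
  · rw [Real.sign_of_neg hx, abs_of_neg hx]; ring
  · simp
  · rw [Real.sign_of_pos hx, abs_of_pos hx]; ring

lemma Real.measurable_sign : Measurable Real.sign :=
  Measurable.ite measurableSet_Iio measurable_const
    (Measurable.ite measurableSet_Ioi measurable_const measurable_const)

namespace ProbabilityTheory

variable {Ω : Type*} [MeasurableSpace Ω] {P : Measure Ω} {X Y : Ω → ℝ}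

lemma hasGaussianLaw_prodMk_of_forall_map_eq_gaussianReal
    (h : ∀ a b : ℝ, ∃ (m : ℝ) (v : ℝ≥0),
      P.map (fun ω ↦ a * X ω + b * Y ω) = gaussianReal m v) :
    HasGaussianLaw (fun ω ↦ (X ω, Y ω)) P := by
  have hmeas : ∀ a b : ℝ, AEMeasurable (fun ω ↦ a * X ω + b * Y ω) P := fun a b ↦ by
    obtain ⟨m, v, hmv⟩ := h a b
    exact .of_map_ne_zero (hmv ▸ IsProbabilityMeasure.ne_zero _)
  have hXY : AEMeasurable (fun ω ↦ (X ω, Y ω)) P :=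
    .prodMk (by simpa using hmeas 1 0) (by simpa using hmeas 0 1)
  refine ⟨isGaussian_of_map_eq_gaussianReal fun L ↦ ?_⟩
  obtain ⟨m, v, hmv⟩ := h (L (1, 0)) (L (0, 1))
  refine ⟨m, v, ?_⟩
  rw [AEMeasurable.map_map_of_aemeasurable (by fun_prop) hXY, ← hmv]
  congr with ω
  have : (X ω, Y ω) = X ω • ((1 : ℝ), (0 : ℝ)) + Y ω • ((0 : ℝ), (1 : ℝ)) := by simp
  rw [Function.comp_apply, this, map_add, map_smul, map_smul, smul_eq_mul, smul_eq_mul,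
    mul_comm, mul_comm (Y ω)]

lemma HasGaussianLaw.indepFun_sub_covariance_div_variance_mul
    (hXY : HasGaussianLaw (fun ω ↦ (X ω, Y ω)) P) (hX : Var[X; P] ≠ 0) :
    IndepFun X (fun ω ↦ Y ω - cov[X, Y; P] / Var[X; P] * X ω) P := by
  have := hXY.isProbabilityMeasure
  set ρ := cov[X, Y; P] / Var[X; P]
  let L : ℝ × ℝ →L[ℝ] ℝ × ℝ :=
    (ContinuousLinearMap.fst ℝ ℝ ℝ).prod
      (ContinuousLinearMap.snd ℝ ℝ ℝ - ρ • ContinuousLinearMap.fst ℝ ℝ ℝ)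
  have hXW : HasGaussianLaw (fun ω ↦ (X ω, Y ω - ρ * X ω)) P := by
    simpa [L] using hXY.map_fun L
  refine hXW.indepFun_of_covariance_eq_zero ?_
  have hX2 := hXY.fst.memLp_two
  rw [covariance_fun_sub_right hX2 hXY.snd.memLp_two (hX2.const_mul ρ),
    covariance_const_mul_right, covariance_self hX2.aemeasurable, div_mul_cancel₀ _ hX, sub_self]

lemma integral_eq_of_map_eq_gaussianReal {m : ℝ} {v : ℝ≥0} (h : P.map X = gaussianReal m v) :
    ∫ ω, X ω ∂P = m := by
  have hX : AEMeasurable X P := .of_map_ne_zero (h ▸ IsProbabilityMeasure.ne_zero _)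
  rw [← integral_id_gaussianReal (μ := m) (v := v), ← h]
  exact (integral_map hX aestronglyMeasurable_id).symm

lemma HasGaussianLaw.integrable_abs_rpow (hX : HasGaussianLaw X P) {p : ℝ} (hp : 0 ≤ p) :
    Integrable (fun ω ↦ |X ω| ^ p) P := by
  have := hX.isProbabilityMeasure
  simpa [ENNReal.toReal_ofReal hp] using
    (hX.memLp (p := ENNReal.ofReal p) ENNReal.ofReal_ne_top).integrable_norm_rpow'

lemma integral_mul_comp_eq_of_indepFun_sub {ρ : ℝ} {g : ℝ → ℝ}
    (hind : IndepFun X (fun ω ↦ Y ω - ρ * X ω) P) (hX : Integrable X P) (hY : Integrable Y P)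
    (hg : Measurable g) (hgX : Integrable (fun ω ↦ g (X ω)) P)
    (hXgX : Integrable (fun ω ↦ X ω * g (X ω)) P) :
    ∫ ω, Y ω * g (X ω) ∂P =
      ρ * ∫ ω, X ω * g (X ω) ∂P + (P[Y] - ρ * P[X]) * ∫ ω, g (X ω) ∂P := by
  set W := fun ω ↦ Y ω - ρ * X ω
  have hW : Integrable W P := hY.sub (hX.const_mul ρ)
  have hWgX : IndepFun W (fun ω ↦ g (X ω)) P := (hind.comp hg measurable_id).symm
  have hWg : Integrable (fun ω ↦ W ω * g (X ω)) P := hWgX.integrable_mul hW hgX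
  calc ∫ ω, Y ω * g (X ω) ∂P = ∫ ω, ρ * (X ω * g (X ω)) + W ω * g (X ω) ∂P := by
        congr with ω; simp only [W]; ring
    _ = ρ * ∫ ω, X ω * g (X ω) ∂P + P[W] * ∫ ω, g (X ω) ∂P := by
        rw [integral_add (hXgX.const_mul ρ) hWg, integral_const_mul,
          hWgX.integral_fun_mul_eq_mul_integral hW.aestronglyMeasurable hgX.aestronglyMeasurable]
    _ = _ := by rw [integral_sub hY (hX.const_mul ρ), integral_const_mul]

end ProbabilityTheory

theorem gaussian_linear_regression_general {Ω : Type*} [MeasurableSpace Ω]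
    (P : Measure Ω) [IsProbabilityMeasure P]
    (X Y : Ω → ℝ)
    (hGauss : ∀ a b : ℝ, ∃ w : NNReal,
      Measure.map (fun ω => a * X ω + b * Y ω) P = gaussianReal 0 w)
    (hVar : 0 < ∫ ω, (X ω) ^ 2 ∂P) (q : ℝ) (hq : 0 < q) :
    ∫ ω, Y ω * Real.sign (X ω) * |X ω| ^ q ∂P =
      ((∫ ω, X ω * Y ω ∂P) / (∫ ω, (X ω) ^ 2 ∂P)) * ∫ ω, |X ω| ^ (q + 1) ∂P := by
  have hXY : HasGaussianLaw (fun ω ↦ (X ω, Y ω)) P :=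
    hasGaussianLaw_prodMk_of_forall_map_eq_gaussianReal fun a b ↦
      ⟨0, (hGauss a b).choose, (hGauss a b).choose_spec⟩
  have hmean (a b : ℝ) : ∫ ω, a * X ω + b * Y ω ∂P = 0 :=
    integral_eq_of_map_eq_gaussianReal (hGauss a b).choose_spec
  have hX0 : P[X] = 0 := by simpa using hmean 1 0
  have hY0 : P[Y] = 0 := by simpa using hmean 0 1
  have hcov : cov[X, Y; P] = ∫ ω, X ω * Y ω ∂P := by simp [covariance, hX0, hY0]
  have hvar : Var[X; P] = ∫ ω, X ω ^ 2 ∂P :=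
    variance_of_integral_eq_zero hXY.fst.aemeasurable hX0
  have hq1 : q + 1 ≠ 0 := by positivity
  have hgX : Integrable (fun ω ↦ Real.sign (X ω) * |X ω| ^ q) P :=
    (hXY.fst.integrable_abs_rpow hq.le).bdd_mul (c := 1)
      (Real.measurable_sign.comp_aemeasurable hXY.fst.aemeasurable).aestronglyMeasurable
      (.of_forall fun ω ↦ by rcases Real.sign_apply_eq (X ω) with h | h | h <;> simp [h])
  have hXgX : Integrable (fun ω ↦ X ω * (Real.sign (X ω) * |X ω| ^ q)) P := by
    simpa only [Real.mul_sign_mul_abs_rpow _ hq1] using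
      hXY.fst.integrable_abs_rpow (by positivity : 0 ≤ q + 1)
  rw [← hcov, ← hvar]
  calc ∫ ω, Y ω * Real.sign (X ω) * |X ω| ^ q ∂P
      = ∫ ω, Y ω * (Real.sign (X ω) * |X ω| ^ q) ∂P := by simp_rw [mul_assoc]
    _ = _ := integral_mul_comp_eq_of_indepFun_sub (g := fun x ↦ Real.sign x * |x| ^ q)
          (hXY.indepFun_sub_covariance_div_variance_mul (hvar ▸ hVar.ne'))
          hXY.fst.integrable hXY.snd.integrable
          (Real.measurable_sign.mul (continuous_abs.measurable.pow_const q)) hgX hXgX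
    _ = _ := by simp only [hX0, hY0, Real.mul_sign_mul_abs_rpow _ hq1]; ring

theorem gaussian_linear_regression {Ω : Type*} [MeasurableSpace Ω]
    (P : Measure Ω) [IsProbabilityMeasure P]
    (X Y : Ω → ℝ) (hX : Measurable X) (hY : Measurable Y)
    (hGauss : ∀ a b : ℝ, ∃ w : NNReal,
      Measure.map (fun ω => a * X ω + b * Y ω) P = gaussianReal 0 w)
    (hVar : 0 < ∫ ω, (X ω) ^ 2 ∂P) (q : ℝ) (hq : 0 < q) :
    ∫ ω, Y ω * Real.sign (X ω) * |X ω| ^ q ∂P =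
      ((∫ ω, X ω * Y ω ∂P) / (∫ ω, (X ω) ^ 2 ∂P)) * ∫ ω, |X ω| ^ (q + 1) ∂P :=
  gaussian_linear_regression_general P X Y hGauss hVar q hq
end
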